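/- arXiv:2111.03289 — 8 statements merged into one kernel-verified Lean document; each statement's English description precedes it below -/
import Mathlib

section
/- Let d ≥ 1, let q > 0 and τ > 0, and let x_1, x_2, …, x_k ∈ ℝ^d be vectors with ‖x_s‖_2 ≤ 1 for all s ∈ [k]. For each s, set V_s = τ·I_d + Σ_{t=1}^{s} x_t x_tᵀ. Let J ⊆ [k] be the set of indices s for which x_sᵀ V_{s-1}^{-1} x_s ≥ q. Then |J| ≤ (2/ln(1+q)) · d · ln(1 + (2/e)/(ln(1+q)·τ)). -/
/-!
Let `W` be the design matrix built from the rounds in `J` alone. Since `W ≤ V` in the Loewner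
order at every round, each `s ∈ J` still has potential at least `q` with respect to `W`, so by the
matrix determinant lemma `τ ^ d (1 + q) ^ |J| ≤ det W`. AM-GM on the eigenvalues of `W` gives
`det W ≤ (τ + |J| / d) ^ d`. With `c = log (1 + q)` this reads `c |J| ≤ d log (1 + |J| / (d τ))`,
and the tangent line of `log` at `2 / (c τ)`, together with `exp s ≤ 1 + e s` on `[0, 1]`, solves
it for `|J|`; here `c τ ≤ q τ ≤ 1` because a potential never exceeds `‖x‖² / τ ≤ 1 / τ`.
-/

open Matrix Finset

namespace Real

lemma log_le_mul_sub_one_sub_log {s z : ℝ} (hs : 0 < s) (hz : 0 < z) :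
    log z ≤ s * z - 1 - log s := by
  have h := log_le_sub_one_of_pos (mul_pos hs hz)
  rw [log_mul hs.ne' hz.ne'] at h
  linarith

lemma exp_le_one_add_exp_one_mul {s : ℝ} (h0 : 0 ≤ s) (h1 : s ≤ 1) :
    exp s ≤ 1 + exp 1 * s := by
  have hconv := convexOn_exp.2 (Set.mem_univ 0) (Set.mem_univ 1) (sub_nonneg.2 h1) h0
    (sub_add_cancel 1 s)
  simp only [smul_eq_mul, mul_zero, mul_one, zero_add, exp_zero] at hconv
  linarith

lemma sub_one_sub_log_le_log_one_add_inv {s : ℝ} (hs0 : 0 < s) (hs1 : s ≤ 1) :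
    s - 1 - log s ≤ log (1 + (exp 1 * s)⁻¹) := by
  have hes : 0 < exp 1 * s := by positivity
  have hexp := log_le_log (exp_pos s) (exp_le_one_add_exp_one_mul hs0.le hs1)
  rw [log_exp] at hexp
  rw [show 1 + (exp 1 * s)⁻¹ = (1 + exp 1 * s) / (exp 1 * s) by field_simp; ring,
    log_div (by positivity) hes.ne', log_mul (exp_pos 1).ne' hs0.ne', log_exp]
  linarith

lemma le_two_div_mul_log_of_mul_le_log_one_add {A y : ℝ} (hA : 0 < A) (hA2 : A ≤ 2)
    (hy : 0 ≤ y) (h : A * y ≤ log (1 + y)) : y ≤ 2 / A * log (1 + 2 / exp 1 / A) := by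
  have hs : 0 < A / 2 := by positivity
  have htangent := log_le_mul_sub_one_sub_log hs (by linarith : 0 < 1 + y)
  have hlog := sub_one_sub_log_le_log_one_add_inv hs (by linarith)
  rw [show (exp 1 * (A / 2))⁻¹ = 2 / exp 1 / A by field_simp] at hlog
  rw [div_mul_eq_mul_div, le_div_iff₀ hA]
  linarith

lemma prod_le_sum_div_card_pow {ι : Type*} [Fintype ι] {z : ι → ℝ} (hz : ∀ i, 0 ≤ z i) :
    ∏ i, z i ≤ ((∑ i, z i) / Fintype.card ι) ^ Fintype.card ι := by
  rcases isEmpty_or_nonempty ι with hι | hι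
  · simp
  have hprod : 0 ≤ ∏ i, z i := prod_nonneg fun i _ => hz i
  have amgm := geom_mean_le_arith_mean univ (fun _ => 1) z (by simp)
    (by simpa using Fintype.card_pos) fun i _ => hz i
  simp only [rpow_one, sum_const, card_univ, nsmul_eq_mul, mul_one, one_mul] at amgm
  calc ∏ i, z i = ((∏ i, z i) ^ (Fintype.card ι : ℝ)⁻¹) ^ Fintype.card ι :=
        (rpow_inv_natCast_pow hprod Fintype.card_ne_zero).symm
    _ ≤ _ := pow_le_pow_left₀ (rpow_nonneg hprod _) amgm _

end Real

open Real in
lemma natCast_le_of_pow_mul_one_add_pow_le {d m : ℕ} {q τ : ℝ} (hd : 0 < d) (hq : 0 < q) (hτ : 0 < τ)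
    (hqτ : q * τ ≤ 1) (h : τ ^ d * (1 + q) ^ m ≤ (τ + m / d) ^ d) :
    (m : ℝ) ≤ 2 / log (1 + q) * d * log (1 + 2 / exp 1 / (log (1 + q) * τ)) := by
  set c := log (1 + q)
  have hc : 0 < c := log_pos (by linarith)
  have hcq : c ≤ q := by simpa using log_le_sub_one_of_pos (by linarith : 0 < 1 + q)
  have hd' : (0 : ℝ) < d := by exact_mod_cast hd
  set y : ℝ := m / (d * τ) with hy_def
  have hpow : (1 + q) ^ m ≤ (1 + y) ^ d := by
    rw [show τ + m / d = τ * (1 + y) by rw [hy_def]; field_simp, mul_pow] at h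
    exact le_of_mul_le_mul_left h (by positivity)
  have hlog : m * c ≤ d * log (1 + y) := by
    simpa only [log_pow] using log_le_log (by positivity) hpow
  have hy : c * τ * y ≤ log (1 + y) := by
    rw [show c * τ * y = m * c / d by rw [hy_def]; field_simp, div_le_iff₀ hd']
    linarith
  have hcτ : c * τ ≤ 2 := by nlinarith
  calc (m : ℝ) = d * τ * y := by rw [hy_def]; field_simp
    _ ≤ d * τ * (2 / (c * τ) * log (1 + 2 / exp 1 / (c * τ))) := by
        gcongr
        exact le_two_div_mul_log_of_mul_le_log_one_add (by positivity) hcτ (by positivity) hy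
    _ = 2 / c * d * log (1 + 2 / exp 1 / (c * τ)) := by field_simp

lemma EuclideanSpace.ofLp_dotProduct_ofLp_self {n : Type*} [Fintype n]
    (v : EuclideanSpace ℝ n) : v.ofLp ⬝ᵥ v.ofLp = ‖v‖ ^ 2 := by
  rw [← real_inner_self_eq_norm_sq, EuclideanSpace.inner_eq_star_dotProduct, star_trivial]

namespace Matrix

variable {n ι : Type*}

lemma posSemidef_vecMulVec_self [Fintype n] (u : n → ℝ) : (vecMulVec u u).PosSemidef := by
  simpa using posSemidef_vecMulVec_self_star u

lemma mulVec_inv_mulVec [Fintype n] [DecidableEq n] {A : Matrix n n ℝ} (hA : IsUnit A.det)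
    (u : n → ℝ) : A *ᵥ A⁻¹ *ᵥ u = u := by
  rw [mulVec_mulVec, mul_nonsing_inv _ hA, one_mulVec]

lemma IsHermitian.dotProduct_mulVec_comm [Fintype n] {A : Matrix n n ℝ} (hA : A.IsHermitian)
    (u v : n → ℝ) : u ⬝ᵥ A *ᵥ v = v ⬝ᵥ A *ᵥ u := by
  rw [dotProduct_mulVec, ← mulVec_transpose, ← conjTranspose_eq_transpose_of_trivial, hA.eq,
    dotProduct_comm]

lemma dotProduct_inv_mulVec_le_of_posSemidef_sub [Fintype n] [DecidableEq n]
    {A B : Matrix n n ℝ} (hA : A.PosDef) (hBA : (B - A).PosSemidef) (u : n → ℝ) :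
    u ⬝ᵥ B⁻¹ *ᵥ u ≤ u ⬝ᵥ A⁻¹ *ᵥ u := by
  have hB : B.PosDef := by simpa using hA.add_posSemidef hBA
  set y := B⁻¹ *ᵥ u
  set z := A⁻¹ *ᵥ u
  have hAz : A *ᵥ z = u := mulVec_inv_mulVec hA.det_pos.ne'.isUnit u
  have hBy : B *ᵥ y = u := mulVec_inv_mulVec hB.det_pos.ne'.isUnit u
  -- `0 ≤ (y - z)ᵀ A (y - z) = yᵀAy - 2 uᵀy + uᵀz` and `yᵀAy ≤ yᵀBy = uᵀy`
  have hyz : 0 ≤ (y - z) ⬝ᵥ A *ᵥ (y - z) := by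
    simpa using hA.posSemidef.dotProduct_mulVec_nonneg (y - z)
  have hy : 0 ≤ y ⬝ᵥ (B - A) *ᵥ y := by simpa using hBA.dotProduct_mulVec_nonneg y
  rw [mulVec_sub, dotProduct_sub, sub_dotProduct, sub_dotProduct, hAz,
    hA.isHermitian.dotProduct_mulVec_comm z y, hAz] at hyz
  rw [sub_mulVec, dotProduct_sub, hBy] at hy
  rw [dotProduct_comm u, dotProduct_comm u]
  linarith

lemma det_add_vecMulVec_self [Fintype n] [DecidableEq n] {M : Matrix n n ℝ} (hM : IsUnit M.det)
    (u : n → ℝ) : (M + vecMulVec u u).det = M.det * (1 + u ⬝ᵥ M⁻¹ *ᵥ u) := by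
  rw [vecMulVec_eq Unit, det_add_replicateCol_mul_replicateRow (ι := Unit) hM]
  congr 1
  rw [Matrix.mul_assoc, ← replicateCol_mulVec, det_unique, add_apply, one_apply_eq,
    replicateRow_mul_replicateCol_apply]

lemma PosSemidef.det_le_trace_div_card_pow [Fintype n] [DecidableEq n] {M : Matrix n n ℝ}
    (hM : M.PosSemidef) : M.det ≤ (M.trace / Fintype.card n) ^ Fintype.card n := by
  rw [hM.isHermitian.det_eq_prod_eigenvalues, hM.isHermitian.trace_eq_sum_eigenvalues]
  exact Real.prod_le_sum_div_card_pow fun i => hM.eigenvalues_nonneg i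

def designMatrix (M : Matrix n n ℝ) (x : ι → n → ℝ) (S : Finset ι) : Matrix n n ℝ :=
  M + ∑ t ∈ S, vecMulVec (x t) (x t)

section designMatrix

variable {M : Matrix n n ℝ} (x : ι → n → ℝ)

@[simp]
lemma designMatrix_empty : designMatrix M x ∅ = M := by
  simp [designMatrix]

lemma designMatrix_insert [DecidableEq ι] {S : Finset ι} {a : ι} (ha : a ∉ S) :
    designMatrix M x (insert a S) = designMatrix M x S + vecMulVec (x a) (x a) := by
  rw [designMatrix, designMatrix, sum_insert ha, add_comm (vecMulVec _ _), add_assoc]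

variable [Fintype n]

lemma trace_designMatrix (S : Finset ι) :
    (designMatrix M x S).trace = M.trace + ∑ t ∈ S, x t ⬝ᵥ x t := by
  simp [designMatrix, trace_sum]

lemma PosDef.designMatrix (hM : M.PosDef) (S : Finset ι) : (designMatrix M x S).PosDef :=
  hM.add_posSemidef (posSemidef_sum S fun t _ => posSemidef_vecMulVec_self (x t))

lemma posSemidef_designMatrix_sub_of_subset [DecidableEq ι] {S T : Finset ι} (hST : S ⊆ T) :
    (designMatrix M x T - designMatrix M x S).PosSemidef := by
  rw [designMatrix, designMatrix, ← sum_sdiff hST, add_sub_add_left_eq_sub, add_sub_cancel_right]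
  exact posSemidef_sum _ fun t _ => posSemidef_vecMulVec_self (x t)

variable [DecidableEq n]

lemma dotProduct_inv_designMatrix_mulVec_antitone [DecidableEq ι] (hM : M.PosDef)
    {S T : Finset ι} (hST : S ⊆ T) (u : n → ℝ) :
    u ⬝ᵥ (designMatrix M x T)⁻¹ *ᵥ u ≤ u ⬝ᵥ (designMatrix M x S)⁻¹ *ᵥ u :=
  dotProduct_inv_mulVec_le_of_posSemidef_sub (hM.designMatrix x S)
    (posSemidef_designMatrix_sub_of_subset x hST) u

/-- `T s` is the full history before round `s`; only the rounds of `S` among it are kept. -/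
lemma det_mul_one_add_pow_card_le_det_designMatrix [LinearOrder ι] (hM : M.PosDef) {q : ℝ}
    (hq : 0 ≤ q) {S : Finset ι} {T : ι → Finset ι} (hST : ∀ s ∈ S, {t ∈ S | t < s} ⊆ T s)
    (hS : ∀ s ∈ S, q ≤ x s ⬝ᵥ (designMatrix M x (T s))⁻¹ *ᵥ x s) :
    M.det * (1 + q) ^ S.card ≤ (designMatrix M x S).det := by
  induction S using Finset.induction_on_max with
  | empty => simp
  | insert a S haS ih =>
    have ha : a ∉ S := fun h => (haS a h).false
    have hfilter : ∀ s ∈ S, {t ∈ insert a S | t < s} = {t ∈ S | t < s} := fun s hs => by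
      rw [filter_insert, if_neg (haS s hs).not_gt]
    have hIH := ih (fun s hs => hfilter s hs ▸ hST s (mem_insert_of_mem hs))
      fun s hs => hS s (mem_insert_of_mem hs)
    have hSa : S ⊆ T a := by
      simpa [filter_insert, filter_true_of_mem haS] using hST a (mem_insert_self a S)
    have hqa : 1 + q ≤ 1 + x a ⬝ᵥ (designMatrix M x S)⁻¹ *ᵥ x a := by
      have := dotProduct_inv_designMatrix_mulVec_antitone x hM hSa (x a)
      linarith [hS a (mem_insert_self a S)]
    have hdet := (hM.designMatrix x S).det_pos
    rw [designMatrix_insert x ha, det_add_vecMulVec_self hdet.ne'.isUnit,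
      card_insert_of_notMem ha, pow_succ, ← mul_assoc]
    exact mul_le_mul hIH hqa (by positivity) hdet.le

lemma det_designMatrix_smul_one_le {τ : ℝ} (hτ : 0 < τ) {S : Finset ι}
    (hx : ∀ t ∈ S, x t ⬝ᵥ x t ≤ 1) :
    (designMatrix (τ • 1) x S).det ≤ (τ + S.card / Fintype.card n) ^ Fintype.card n := by
  refine ((PosDef.one.smul hτ).designMatrix x S).posSemidef.det_le_trace_div_card_pow.trans ?_
  have hsum : ∑ t ∈ S, x t ⬝ᵥ x t ≤ S.card := by simpa using sum_le_card_nsmul S _ 1 hx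
  rcases isEmpty_or_nonempty n with hn | hn
  · simp
  rw [trace_designMatrix, trace_smul, trace_one, smul_eq_mul, add_div,
    mul_div_cancel_right₀ τ (by simp)]
  have hsum0 : 0 ≤ ∑ t ∈ S, x t ⬝ᵥ x t :=
    sum_nonneg fun t _ => by simpa using dotProduct_star_self_nonneg (x t)
  gcongr

lemma dotProduct_inv_designMatrix_smul_one_mulVec_le [DecidableEq ι] {τ : ℝ} (hτ : 0 < τ)
    (S : Finset ι) (u : n → ℝ) : u ⬝ᵥ (designMatrix (τ • 1) x S)⁻¹ *ᵥ u ≤ u ⬝ᵥ u / τ := by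
  have hinv : (τ • 1 : Matrix n n ℝ)⁻¹ = τ⁻¹ • 1 := inv_eq_left_inv (by simp [smul_smul, hτ.ne'])
  have h := dotProduct_inv_designMatrix_mulVec_antitone x (PosDef.one.smul hτ) (empty_subset S) u
  rwa [designMatrix_empty, hinv, smul_mulVec, one_mulVec, dotProduct_smul, smul_eq_mul,
    inv_mul_eq_div] at h

end designMatrix

end Matrix

/-- **Elliptical potential count lemma.**
Let `d ≥ 1`, `q > 0`, `τ > 0`, and let `x 1, …, x k ∈ ℝ^d` with `‖x s‖₂ ≤ 1` for all
`s ∈ [k]`.  Set `V s = τ • I + ∑_{t=1}^{s} x t (x t)ᵀ` and let `J ⊆ [k]` be the set of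
indices `s` with `(x s)ᵀ (V (s-1))⁻¹ (x s) ≥ q`.  Then
`|J| ≤ (2 / ln(1+q)) · d · ln(1 + (2/e) / (ln(1+q) · τ))`. -/
theorem elliptical_potential_count
    (d k : ℕ) (hd : 1 ≤ d) (q τ : ℝ) (hq : 0 < q) (hτ : 0 < τ)
    (x : ℕ → EuclideanSpace ℝ (Fin d))
    (hx : ∀ s ∈ Finset.Icc 1 k, ‖x s‖ ≤ 1)
    (V : ℕ → Matrix (Fin d) (Fin d) ℝ)
    (hV : ∀ s, V s = τ • (1 : Matrix (Fin d) (Fin d) ℝ)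
        + ∑ t ∈ Finset.Icc 1 s, Matrix.vecMulVec (x t) (x t))
    (J : Finset ℕ)
    (hJ : J = (Finset.Icc 1 k).filter (fun s => q ≤ x s ⬝ᵥ (V (s - 1))⁻¹ *ᵥ x s)) :
    (J.card : ℝ) ≤ 2 / Real.log (1 + q) * d
        * Real.log (1 + (2 / Real.exp 1) / (Real.log (1 + q) * τ)) := by
  set y : ℕ → Fin d → ℝ := fun t => (x t).ofLp
  have hJk : J ⊆ Icc 1 k := hJ ▸ filter_subset _ _
  have hnorm : ∀ s ∈ J, y s ⬝ᵥ y s ≤ 1 := fun s hs => by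
    rw [EuclideanSpace.ofLp_dotProduct_ofLp_self]
    exact pow_le_one₀ (norm_nonneg _) (hx s (hJk hs))
  have hpot : ∀ s ∈ J, q ≤ y s ⬝ᵥ (designMatrix (τ • 1) y (Icc 1 (s - 1)))⁻¹ *ᵥ y s :=
    fun s hs => by have h := (mem_filter.1 (hJ ▸ hs)).2; rwa [hV] at h
  have hhistory : ∀ s ∈ J, {t ∈ J | t < s} ⊆ Icc 1 (s - 1) := fun s _ t ht => by
    have := mem_Icc.1 (hJk (mem_filter.1 ht).1)
    exact mem_Icc.2 ⟨this.1, by have := (mem_filter.1 ht).2; omega⟩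
  have hdet := (det_mul_one_add_pow_card_le_det_designMatrix y (PosDef.one.smul hτ) hq.le
    hhistory hpot).trans (det_designMatrix_smul_one_le y hτ hnorm)
  rcases J.eq_empty_or_nonempty with hJ0 | ⟨s, hs⟩
  · have hc : 0 < Real.log (1 + q) := Real.log_pos (by linarith)
    rw [hJ0, card_empty, Nat.cast_zero]
    exact mul_nonneg (by positivity) (Real.log_nonneg (le_add_of_nonneg_right (by positivity)))
  have hqτ : q * τ ≤ 1 := by
    have := (hpot s hs).trans (dotProduct_inv_designMatrix_smul_one_mulVec_le y hτ _ (y s))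
    rw [le_div_iff₀ hτ] at this
    linarith [hnorm s hs]
  exact natCast_le_of_pow_mul_one_add_pow_le hd hq hτ hqτ (by simpa [det_smul] using hdet)
end

section
/- Let A > 0, B > 0, and let x > 0 be a real number satisfying x ≤ A·ln(1 + B·x). Then x ≤ 2A·ln((2A/e)·(1/x + B)). -/
/-- Self-bounding logarithmic inequality: if `A, B, x > 0` and `x ≤ A·ln(1 + B·x)`,
then `x ≤ 2A·ln((2A/e)·(1/x + B))`. -/
theorem self_bounding_log
    (A B x : ℝ) (hA : 0 < A) (hB : 0 < B) (hx : 0 < x)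
    (h : x ≤ A * Real.log (1 + B * x)) :
    x ≤ 2 * A * Real.log ((2 * A / Real.exp 1) * (1 / x + B)) := by
  have hxB : 0 < 1 / x + B := by positivity
  have hsplit : Real.log (1 + B * x) = Real.log x + Real.log (1 / x + B) := by
    have : 1 + B * x = x * (1 / x + B) := by field_simp
    rw [this, Real.log_mul hx.ne' hxB.ne']
  have hlog2A : Real.log ((2 * A / Real.exp 1) * (1 / x + B))
      = Real.log (2 * A) - 1 + Real.log (1 / x + B) := by
    rw [Real.log_mul (by positivity) hxB.ne', Real.log_div (by positivity) (Real.exp_pos 1).ne',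
      Real.log_exp]
  have hkey : Real.log x ≤ x / (2 * A) - 1 + Real.log (2 * A) := by
    have h1 : Real.log (x / (2 * A)) ≤ x / (2 * A) - 1 :=
      Real.log_le_sub_one_of_pos (by positivity)
    rw [Real.log_div hx.ne' (by positivity)] at h1
    linarith
  have h2 : x ≤ A * (x / (2 * A) - 1 + Real.log (2 * A) + Real.log (1 / x + B)) := by
    rw [hsplit] at h
    nlinarith [hA.le]
  have hA2 : A * (x / (2 * A)) = x / 2 := by field_simp
  rw [hlog2A]
  nlinarith [h2]
end

section
/- Let K ≥ 1 be an integer and δ ∈ (0, 1). Let (F_k)_{k≥1} be a filtration on a probability space and, for each k ∈ [K], let ε_k be an F_{k+1}-measurable real random variable with E[ε_k | F_k] = 0 and |ε_k| ≤ 1 almost surely, and set σ_k² = E[ε_k² | F_k]. Then with probability at least 1 − δ: for all k ∈ [K], Σ_{s=1}^{k} ε_s² ≤ 8·Σ_{s=1}^{k} σ_s² + 4·log(4K(log₂(K) + 2)/δ). -/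
/-! Conditionally on `F s`, convexity of `exp` on `[0, 1]` gives
`E[exp (ε s ^ 2) | F s] ≤ 1 + (e - 1) σ s ≤ exp (8 σ s)`, so `exp (∑_{s ≤ k} (ε s ^ 2 - 8 σ s))`
has expectation at most `1`. Markov's inequality bounds each deviation event by `exp (-t)`, and
with `t = 4 log (4K (log₂ K + 2) / δ)` the union bound over `k ∈ [K]` costs `K exp (-t) ≤ δ`. -/

open MeasureTheory ProbabilityTheory Finset Real Filter
open scoped ENNReal

theorem Real.exp_le_one_add_mul_of_mem_Icc {x : ℝ} (hx : x ∈ Set.Icc (0 : ℝ) 1) :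
    exp x ≤ 1 + (exp 1 - 1) * x := by
  have h := convexOn_exp.2 (Set.mem_univ 0) (Set.mem_univ 1) (sub_nonneg.2 hx.2) hx.1
    (sub_add_cancel 1 x)
  simp only [smul_eq_mul, mul_zero, mul_one, zero_add, exp_zero] at h
  linarith

theorem Real.natCast_mul_exp_neg_four_mul_log_le {K : ℕ} (hK : 1 ≤ K) {δ L : ℝ}
    (hδ0 : 0 < δ) (hδ1 : δ ≤ 1) (hL : 0 ≤ L) :
    K * exp (-(4 * log (4 * K * (L + 2) / δ))) ≤ δ := by
  have hK1 : (1 : ℝ) ≤ K := by exact_mod_cast hK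
  set R := 4 * K * (L + 2) / δ
  have hKR : K ≤ δ * R := by
    simp only [R, mul_div_cancel₀ _ hδ0.ne']
    nlinarith
  have hR : 1 ≤ R := by nlinarith
  rw [show (4 : ℝ) = (4 : ℕ) by norm_num, ← log_pow, exp_neg, exp_log (by positivity),
    ← div_eq_mul_inv, div_le_iff₀ (by positivity)]
  calc (K : ℝ) ≤ δ * R := hKR
    _ ≤ δ * R ^ 4 := by gcongr; exact le_self_pow₀ hR (by norm_num)

section UnionBound

variable {Ω : Type*} {m0 : MeasurableSpace Ω} {μ : Measure Ω} [IsProbabilityMeasure μ]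

theorem one_sub_card_mul_le_measure_forall {ι : Type*} (s : Finset ι) (p : ι → Ω → Prop)
    {a : ℝ≥0∞} (h : ∀ i ∈ s, μ {ω | ¬ p i ω} ≤ a) :
    1 - #s * a ≤ μ {ω | ∀ i ∈ s, p i ω} := by
  set G := {ω | ∀ i ∈ s, p i ω}
  have h_compl : μ Gᶜ ≤ #s * a := calc
    μ Gᶜ = μ (⋃ i ∈ s, {ω | ¬ p i ω}) := by congr 1; ext ω; simp [G]
    _ ≤ ∑ i ∈ s, μ {ω | ¬ p i ω} := measure_biUnion_finset_le _ _
    _ ≤ ∑ _i ∈ s, a := sum_le_sum h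
    _ = #s * a := by rw [sum_const, nsmul_eq_mul]
  rw [tsub_le_iff_right]
  calc 1 = μ (G ∪ Gᶜ) := by rw [Set.union_compl_self, measure_univ]
    _ ≤ μ G + μ Gᶜ := measure_union_le _ _
    _ ≤ μ G + #s * a := by gcongr

end UnionBound

theorem integrable_exp_of_ae_le {Ω : Type*} {m0 : MeasurableSpace Ω} {μ : Measure Ω}
    [IsFiniteMeasure μ] {X : Ω → ℝ} (hX : AEStronglyMeasurable X μ) {b : ℝ}
    (hb : ∀ᵐ ω ∂μ, X ω ≤ b) :
    Integrable (fun ω => exp (X ω)) μ :=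
  .of_bound (continuous_exp.comp_aestronglyMeasurable hX) (exp b) (hb.mono fun ω hω => by
    rw [norm_eq_abs, abs_of_pos (exp_pos _)]; exact exp_le_exp.2 hω)

theorem condExp_exp_le_exp_mul_condExp {Ω : Type*} {m m0 : MeasurableSpace Ω} {μ : Measure Ω}
    [IsFiniteMeasure μ] (hm : m ≤ m0) {X : Ω → ℝ} (hX_meas : AEStronglyMeasurable X μ)
    (hX : ∀ᵐ ω ∂μ, X ω ∈ Set.Icc (0 : ℝ) 1) {c : ℝ} (hc : exp 1 - 1 ≤ c) :
    μ[fun ω => exp (X ω) | m] ≤ᵐ[μ] fun ω => exp (c * μ[X | m] ω) := by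
  have h_bound : ∀ᵐ ω ∂μ, exp (X ω) ≤ 1 + (exp 1 - 1) * X ω :=
    hX.mono fun ω hω => exp_le_one_add_mul_of_mem_Icc hω
  have hX_int : Integrable X μ :=
    .of_bound hX_meas 1 (hX.mono fun ω hω => abs_le.2 ⟨by linarith [hω.1], hω.2⟩)
  have h_exp_int := integrable_exp_of_ae_le hX_meas (hX.mono fun _ hω => hω.2)
  have h_affine_int : Integrable (fun ω => 1 + (exp 1 - 1) * X ω) μ :=
    (integrable_const 1).add (hX_int.const_mul _)
  have h_affine : μ[fun ω => 1 + (exp 1 - 1) * X ω | m] =ᵐ[μ]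
      fun ω => 1 + (exp 1 - 1) * μ[X | m] ω := by
    change μ[(fun _ => (1 : ℝ)) + (exp 1 - 1) • X | m] =ᵐ[μ] _
    filter_upwards [condExp_add (integrable_const 1) (hX_int.smul (exp 1 - 1)) m,
      condExp_smul (exp 1 - 1) X m] with ω h_add h_smul
    rw [h_add, Pi.add_apply, h_smul, condExp_const hm]
    rfl
  filter_upwards [condExp_mono h_exp_int h_affine_int h_bound, h_affine,
    condExp_nonneg (hX.mono fun _ hω => hω.1)] with ω h_mono h_eq h_nonneg
  calc μ[fun ω => exp (X ω) | m] ω ≤ 1 + (exp 1 - 1) * μ[X | m] ω := h_mono.trans_eq h_eq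
    _ ≤ exp ((exp 1 - 1) * μ[X | m] ω) := by
      linarith [add_one_le_exp ((exp 1 - 1) * μ[X | m] ω)]
    _ ≤ exp (c * μ[X | m] ω) := exp_le_exp.2 (mul_le_mul_of_nonneg_right hc h_nonneg)

section CompensatedSum

variable {Ω : Type*} {m0 : MeasurableSpace Ω} {μ : Measure Ω} {F : Filtration ℕ m0}
  {Y : ℕ → Ω → ℝ} {c : ℝ} {k : ℕ}

noncomputable def compensatedSum (μ : Measure Ω) (F : Filtration ℕ m0) (Y : ℕ → Ω → ℝ) (c : ℝ)
    (k : ℕ) (ω : Ω) : ℝ :=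
  ∑ s ∈ Icc 1 k, (Y s ω - c * μ[Y s | F s] ω)

theorem compensatedSum_succ (k : ℕ) (ω : Ω) :
    compensatedSum μ F Y c (k + 1) ω =
      compensatedSum μ F Y c k ω + (Y (k + 1) ω - c * μ[Y (k + 1) | F (k + 1)] ω) :=
  sum_Icc_succ_top (Nat.le_add_left 1 k) _

theorem compensatedSum_eq_sub (k : ℕ) (ω : Ω) :
    compensatedSum μ F Y c k ω = ∑ s ∈ Icc 1 k, Y s ω - c * ∑ s ∈ Icc 1 k, μ[Y s | F s] ω := by
  rw [compensatedSum, sum_sub_distrib, mul_sum]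

theorem stronglyMeasurable_compensatedSum
    (hY_meas : ∀ s ∈ Icc 1 k, StronglyMeasurable[F (s + 1)] (Y s)) :
    StronglyMeasurable[F (k + 1)] (compensatedSum μ F Y c k) := by
  refine stronglyMeasurable_fun_sum _ fun s hs => ?_
  have hsk := (mem_Icc.1 hs).2
  exact ((hY_meas s hs).mono (F.mono (by omega))).sub
    ((stronglyMeasurable_condExp.mono (F.mono (by omega))).const_mul c)

theorem compensatedSum_le (hc : 0 ≤ c) (hY : ∀ s ∈ Icc 1 k, ∀ᵐ ω ∂μ, Y s ω ∈ Set.Icc (0 : ℝ) 1) :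
    ∀ᵐ ω ∂μ, compensatedSum μ F Y c k ω ≤ k := by
  have h_terms : ∀ s ∈ Icc 1 k, ∀ᵐ ω ∂μ, Y s ω ≤ 1 ∧ 0 ≤ μ[Y s | F s] ω := fun s hs => by
    filter_upwards [hY s hs, condExp_nonneg ((hY s hs).mono fun _ hω => hω.1)] with ω hω h_nonneg
    exact ⟨hω.2, h_nonneg⟩
  filter_upwards [(eventually_all_finset _).2 h_terms] with ω hω
  calc compensatedSum μ F Y c k ω ≤ ∑ _s ∈ Icc 1 k, (1 : ℝ) :=
        sum_le_sum fun s hs => by nlinarith [hω s hs]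
    _ = k := by simp

theorem integrable_exp_compensatedSum [IsFiniteMeasure μ] (hc : 0 ≤ c)
    (hY_meas : ∀ s ∈ Icc 1 k, StronglyMeasurable[F (s + 1)] (Y s))
    (hY : ∀ s ∈ Icc 1 k, ∀ᵐ ω ∂μ, Y s ω ∈ Set.Icc (0 : ℝ) 1) :
    Integrable (fun ω => exp (compensatedSum μ F Y c k ω)) μ :=
  integrable_exp_of_ae_le
    ((stronglyMeasurable_compensatedSum hY_meas).mono (F.le _)).aestronglyMeasurable
    (compensatedSum_le hc hY)

theorem integral_exp_compensatedSum_le_one [IsProbabilityMeasure μ] (hc : exp 1 - 1 ≤ c)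
    (hY_meas : ∀ s ∈ Icc 1 k, StronglyMeasurable[F (s + 1)] (Y s))
    (hY : ∀ s ∈ Icc 1 k, ∀ᵐ ω ∂μ, Y s ω ∈ Set.Icc (0 : ℝ) 1) :
    ∫ ω, exp (compensatedSum μ F Y c k ω) ∂μ ≤ 1 := by
  have hc0 : 0 ≤ c := by linarith [add_one_le_exp 1]
  induction k with
  | zero => simp [compensatedSum]
  | succ k ih =>
    have hsub : Icc 1 k ⊆ Icc 1 (k + 1) := Icc_subset_Icc_right k.le_succ
    have hmem : k + 1 ∈ Icc 1 (k + 1) := right_mem_Icc.2 (Nat.le_add_left 1 k)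
    have hY_meas' := fun s hs => hY_meas s (hsub hs)
    have hY' := fun s hs => hY s (hsub hs)
    set σ := μ[Y (k + 1) | F (k + 1)]
    set g : Ω → ℝ := fun ω => exp (compensatedSum μ F Y c k ω - c * σ ω)
    have h_split : (fun ω => exp (compensatedSum μ F Y c (k + 1) ω)) =
        g * fun ω => exp (Y (k + 1) ω) := by
      ext ω
      rw [compensatedSum_succ, Pi.mul_apply, ← exp_add]
      congr 1
      ring
    have hg_meas : StronglyMeasurable[F (k + 1)] g :=
      continuous_exp.comp_stronglyMeasurable ((stronglyMeasurable_compensatedSum hY_meas').sub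
        (stronglyMeasurable_condExp.const_mul c))
    have hY_aesm : AEStronglyMeasurable (Y (k + 1)) μ :=
      ((hY_meas _ hmem).mono (F.le _)).aestronglyMeasurable
    have h_pull := condExp_mul_of_stronglyMeasurable_left hg_meas
      (h_split ▸ integrable_exp_compensatedSum hc0 hY_meas hY)
      (integrable_exp_of_ae_le hY_aesm ((hY _ hmem).mono fun _ hω => hω.2))
    have h_step : g * μ[fun ω => exp (Y (k + 1) ω) | F (k + 1)] ≤ᵐ[μ]
        fun ω => exp (compensatedSum μ F Y c k ω) := by
      filter_upwards [condExp_exp_le_exp_mul_condExp (F.le _) hY_aesm (hY _ hmem) hc] with ω hω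
      calc g ω * μ[fun ω => exp (Y (k + 1) ω) | F (k + 1)] ω ≤ g ω * exp (c * σ ω) :=
            mul_le_mul_of_nonneg_left hω (exp_pos _).le
        _ = exp (compensatedSum μ F Y c k ω) := by rw [← exp_add, sub_add_cancel]
    calc ∫ ω, exp (compensatedSum μ F Y c (k + 1) ω) ∂μ
        = ∫ ω, μ[g * fun ω => exp (Y (k + 1) ω) | F (k + 1)] ω ∂μ := by
          rw [h_split, integral_condExp (F.le _)]
      _ ≤ ∫ ω, exp (compensatedSum μ F Y c k ω) ∂μ :=
          integral_mono_ae integrable_condExp (integrable_exp_compensatedSum hc0 hY_meas' hY')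
            (h_pull.trans_le h_step)
      _ ≤ 1 := ih hY_meas' hY'

theorem measure_le_compensatedSum_le [IsProbabilityMeasure μ] (hc : exp 1 - 1 ≤ c)
    (hY_meas : ∀ s ∈ Icc 1 k, StronglyMeasurable[F (s + 1)] (Y s))
    (hY : ∀ s ∈ Icc 1 k, ∀ᵐ ω ∂μ, Y s ω ∈ Set.Icc (0 : ℝ) 1) (t : ℝ) :
    μ {ω | t ≤ compensatedSum μ F Y c k ω} ≤ ENNReal.ofReal (exp (-t)) := by
  have h_int := integrable_exp_compensatedSum (by linarith [add_one_le_exp 1]) hY_meas hY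
  have h_markov := measure_ge_le_exp_mul_mgf (μ := μ) t zero_le_one
    (by simpa only [one_mul] using h_int)
  have h_mgf : mgf (compensatedSum μ F Y c k) μ 1 ≤ 1 := by
    simpa only [mgf, one_mul] using integral_exp_compensatedSum_le_one hc hY_meas hY
  rw [← ofReal_measureReal]
  gcongr
  calc μ.real {ω | t ≤ compensatedSum μ F Y c k ω}
      ≤ exp (-1 * t) * mgf (compensatedSum μ F Y c k) μ 1 := h_markov
    _ ≤ exp (-t) := by
      rw [neg_one_mul]
      exact mul_le_of_le_one_right (exp_pos _).le h_mgf

theorem measure_sum_gt_le [IsProbabilityMeasure μ] (hc : exp 1 - 1 ≤ c)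
    (hY_meas : ∀ s ∈ Icc 1 k, StronglyMeasurable[F (s + 1)] (Y s))
    (hY : ∀ s ∈ Icc 1 k, ∀ᵐ ω ∂μ, Y s ω ∈ Set.Icc (0 : ℝ) 1) {σ : ℕ → Ω → ℝ}
    (hσ : ∀ s ∈ Icc 1 k, σ s =ᵐ[μ] μ[Y s | F s]) (t : ℝ) :
    μ {ω | ¬ ∑ s ∈ Icc 1 k, Y s ω ≤ c * ∑ s ∈ Icc 1 k, σ s ω + t} ≤ ENNReal.ofReal (exp (-t)) := by
  refine (measure_mono_ae ?_).trans (measure_le_compensatedSum_le hc hY_meas hY t)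
  filter_upwards [(eventually_all_finset _).2 hσ] with ω hω h_gt
  have h_lt : c * ∑ s ∈ Icc 1 k, σ s ω + t < ∑ s ∈ Icc 1 k, Y s ω := not_le.1 h_gt
  rw [sum_congr rfl hω] at h_lt
  show t ≤ compensatedSum μ F Y c k ω
  rw [compensatedSum_eq_sub]
  linarith

end CompensatedSum

theorem cumulative_variance_concentration_general
    {Ω : Type*} {m0 : MeasurableSpace Ω} (μ : Measure Ω) [IsProbabilityMeasure μ]
    (K : ℕ) (hK : 1 ≤ K) (δ : ℝ) (hδ : δ ∈ Set.Ioo (0 : ℝ) 1)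
    (F : Filtration ℕ m0)
    (ε : ℕ → Ω → ℝ)
    (hmeas : ∀ k ∈ Finset.Icc 1 K, StronglyMeasurable[F (k + 1)] (ε k))
    (hbdd : ∀ k ∈ Finset.Icc 1 K, ∀ᵐ ω ∂μ, |ε k ω| ≤ 1)
    (σ2 : ℕ → Ω → ℝ)
    (hσ2 : ∀ k ∈ Finset.Icc 1 K, σ2 k =ᵐ[μ] μ[fun ω => (ε k ω) ^ 2 | F k]) :
    ENNReal.ofReal (1 - δ) ≤
      μ {ω | ∀ k ∈ Finset.Icc 1 K,
        ∑ s ∈ Finset.Icc 1 k, (ε s ω) ^ 2 ≤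
          8 * ∑ s ∈ Finset.Icc 1 k, σ2 s ω
            + 4 * Real.log (4 * K * (Real.logb 2 K + 2) / δ)} := by
  set t := 4 * log (4 * K * (logb 2 K + 2) / δ)
  have h_sq : ∀ s ∈ Icc 1 K, ∀ᵐ ω ∂μ, ε s ω ^ 2 ∈ Set.Icc (0 : ℝ) 1 := fun s hs =>
    (hbdd s hs).mono fun ω hω => ⟨sq_nonneg _, (sq_le_one_iff_abs_le_one _).2 hω⟩
  have h_tail (k : ℕ) (hk : k ∈ Icc 1 K) :
      μ {ω | ¬ ∑ s ∈ Icc 1 k, ε s ω ^ 2 ≤ 8 * ∑ s ∈ Icc 1 k, σ2 s ω + t} ≤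
        ENNReal.ofReal (exp (-t)) := by
    have hsub : Icc 1 k ⊆ Icc 1 K := Icc_subset_Icc_right (mem_Icc.1 hk).2
    exact measure_sum_gt_le (Y := fun s ω => ε s ω ^ 2) (by linarith [exp_one_lt_d9])
      (fun s hs => (hmeas s (hsub hs)).pow 2) (fun s hs => h_sq s (hsub hs))
      (fun s hs => hσ2 s (hsub hs)) t
  have h_union : #(Icc 1 K) * ENNReal.ofReal (exp (-t)) ≤ ENNReal.ofReal δ := by
    rw [Nat.card_Icc, add_tsub_cancel_right, ← ENNReal.ofReal_natCast,
      ← ENNReal.ofReal_mul (Nat.cast_nonneg K)]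
    have h_logb : 0 ≤ logb 2 K := logb_nonneg one_lt_two (by exact_mod_cast hK)
    exact ENNReal.ofReal_le_ofReal (natCast_mul_exp_neg_four_mul_log_le hK hδ.1 hδ.2.le h_logb)
  calc ENNReal.ofReal (1 - δ) = 1 - ENNReal.ofReal δ := by
        rw [ENNReal.ofReal_sub _ hδ.1.le, ENNReal.ofReal_one]
    _ ≤ 1 - #(Icc 1 K) * ENNReal.ofReal (exp (-t)) := tsub_le_tsub_left h_union 1
    _ ≤ _ := one_sub_card_mul_le_measure_forall _ _ h_tail

/-- Concentration of the cumulative squared noise around the cumulative conditional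
variance (the event `E₂` in the analysis of VOFUL2): with probability at least `1 − δ`,
for all `k ∈ [K]`, `∑_{s=1}^k ε s² ≤ 8·∑_{s=1}^k σ s² + 4·log(4K(log₂ K + 2)/δ)`. -/
theorem cumulative_variance_concentration
    {Ω : Type*} {m0 : MeasurableSpace Ω} (μ : Measure Ω) [IsProbabilityMeasure μ]
    (K : ℕ) (hK : 1 ≤ K) (δ : ℝ) (hδ : δ ∈ Set.Ioo (0 : ℝ) 1)
    (F : Filtration ℕ m0)
    (ε : ℕ → Ω → ℝ)
    (hmeas : ∀ k ∈ Finset.Icc 1 K, StronglyMeasurable[F (k + 1)] (ε k))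
    (hcond : ∀ k ∈ Finset.Icc 1 K, μ[ε k | F k] =ᵐ[μ] 0)
    (hbdd : ∀ k ∈ Finset.Icc 1 K, ∀ᵐ ω ∂μ, |ε k ω| ≤ 1)
    (σ2 : ℕ → Ω → ℝ)
    (hσ2 : ∀ k ∈ Finset.Icc 1 K, σ2 k =ᵐ[μ] μ[fun ω => (ε k ω) ^ 2 | F k]) :
    ENNReal.ofReal (1 - δ) ≤
      μ {ω | ∀ k ∈ Finset.Icc 1 K,
        ∑ s ∈ Finset.Icc 1 k, (ε s ω) ^ 2 ≤
          8 * ∑ s ∈ Finset.Icc 1 k, σ2 s ω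
            + 4 * Real.log (4 * K * (Real.logb 2 K + 2) / δ)} :=
  cumulative_variance_concentration_general μ K hK δ hδ F ε hmeas hbdd σ2 hσ2
end

section
/- Let d ≥ 1, k ≥ 2, ℓ ≥ 1 be integers, ι ≥ 1 a real, and A ≥ 0 a real. Let x_1, …, x_{k−1} ∈ ℝ^d with ‖x_s‖_2 ≤ 1, let y_1, …, y_{k−1} ∈ ℝ, and let θ*, θ ∈ ℝ^d with ‖θ*‖_2 ≤ 1 and ‖θ‖_2 ≤ 1. Set μ = θ − θ*, ε_s(ϑ) = y_s − x_sᵀϑ, and W = 2^{−ℓ}·I_d + Σ_{s=1}^{k−1} min{1, 2^{−ℓ}/|x_sᵀμ|}·x_s x_sᵀ. Assume: (a) for each ϑ ∈ {θ*, θ}: |Σ_{s=1}^{k−1} ⌊x_sᵀμ⌉_ℓ · ε_s(ϑ)| ≤ √(ι · Σ_{s=1}^{k−1} ⌊x_sᵀμ⌉_ℓ² · ε_s(ϑ)²) + 2^{−ℓ}·ι; and (b) Σ_{s=1}^{k−1} ε_s(θ*)² ≤ 8A + ι/16. Then μᵀ W μ ≤ 2^{−ℓ}·√(128·A·ι) +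 11·2^{−ℓ}·ι. -/
/-!
With `t_s = x_sᵀμ` and `w_s = ⌊t_s⌉_ℓ` one has `min{1, 2^{-ℓ}/|t_s|}·t_s² = w_s t_s`, so
`μᵀWμ = 2^{-ℓ}‖μ‖² + S` with `S = ∑ w_s t_s ≥ 0`. Since `ε_s(θ*) − ε_s(θ) = t_s`, `S` is the
difference of the two sums controlled by (a). As `|w_s| ≤ 2^{-ℓ}`, (b) bounds the variance term
for `θ*` by `√(2^{-2ℓ}ι(8A + ι/16))`, and by Minkowski the one for `θ` exceeds it by at most
`√(ι ∑ (w_s t_s)²) ≤ √(2·2^{-ℓ}ι S) ≤ 2^{-ℓ}ι + S/2` (AM–GM). The resulting inequality bounds `S`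
by `S/2` plus known terms, which solves to `S ≤ 4·2^{-ℓ}√(ι(8A + ι/16)) + 6·2^{-ℓ}ι`.
-/

open Matrix Finset

/-- The clipping operator `⌊x⌉_ℓ := min{|x|, 2^{−ℓ}}·x/|x|` (with `0/0 = 0`). -/
noncomputable def clip (ℓ : ℕ) (x : ℝ) : ℝ :=
  min |x| ((2 : ℝ) ^ (-(ℓ : ℤ))) * (x / |x|)

lemma sqrt_sum_sq_sub_le {α : Type*} (s : Finset α) (f g : α → ℝ) :
    √(∑ i ∈ s, (f i - g i) ^ 2) ≤ √(∑ i ∈ s, f i ^ 2) + √(∑ i ∈ s, g i ^ 2) := by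
  simpa [Real.sqrt_eq_rpow, sq_abs, ← sub_eq_add_neg] using
    Real.Lp_add_le s f (-g) (p := 2) one_le_two

lemma sqrt_mul_le_add_div_two {a b : ℝ} (ha : 0 ≤ a) (hb : 0 ≤ b) : √(a * b) ≤ (a + b) / 2 :=
  Real.sqrt_le_iff.2 ⟨by positivity, by nlinarith [sq_nonneg (a - b)]⟩

lemma four_mul_sqrt_mul_le {A ι : ℝ} (hA : 0 ≤ A) (hι : 0 ≤ ι) :
    4 * √(ι * (8 * A + ι / 16)) ≤ √(128 * A * ι) + ι := by
  rw [show 128 * A * ι = 4 ^ 2 * (8 * A * ι) by ring, Real.sqrt_mul (by norm_num : (0 : ℝ) ≤ 4 ^ 2),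
    Real.sqrt_sq (by norm_num : (0 : ℝ) ≤ 4)]
  have : √(ι * (8 * A + ι / 16)) ≤ √(8 * A * ι) + ι / 4 :=
    Real.sqrt_le_iff.2 ⟨by positivity, by
      nlinarith [Real.sq_sqrt (by positivity : 0 ≤ 8 * A * ι), Real.sqrt_nonneg (8 * A * ι)]⟩
  linarith

lemma dotProduct_mulVec_smul_one_add_sum_vecMulVec {R n α : Type*} [CommRing R] [Fintype n]
    [DecidableEq n] (a : R) (T : Finset α) (f : α → R) (x : α → n → R) (v : n → R) :
    v ⬝ᵥ (a • 1 + ∑ s ∈ T, f s • vecMulVec (x s) (x s)) *ᵥ v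
      = a * (v ⬝ᵥ v) + ∑ s ∈ T, f s * (x s ⬝ᵥ v) ^ 2 := by
  simp only [add_mulVec, smul_mulVec, one_mulVec, sum_mulVec, vecMulVec_mulVec, op_smul_eq_smul,
    dotProduct_add, dotProduct_smul, dotProduct_sum, smul_eq_mul]
  simp only [dotProduct_comm v, sq]

lemma abs_dotProduct_le_norm_mul_norm {n : Type*} [Fintype n] (x y : EuclideanSpace ℝ n) :
    |x ⬝ᵥ y| ≤ ‖x‖ * ‖y‖ := by
  simpa [EuclideanSpace.inner_eq_star_dotProduct, mul_comm ‖y‖] using abs_real_inner_le_norm y x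

lemma abs_clip (ℓ : ℕ) (u : ℝ) : |clip ℓ u| = min |u| ((2 : ℝ) ^ (-(ℓ : ℤ))) := by
  rcases eq_or_ne u 0 with rfl | hu
  · simp [clip]
  · rw [clip, abs_mul, abs_div, abs_abs, div_self (abs_ne_zero.2 hu), mul_one,
      abs_of_nonneg (le_min (abs_nonneg u) (by positivity))]

lemma clip_mul_self (ℓ : ℕ) (u : ℝ) : clip ℓ u * u = min |u| ((2 : ℝ) ^ (-(ℓ : ℤ))) * |u| := by
  rcases eq_or_ne u 0 with rfl | hu
  · simp [clip]
  · rw [clip, mul_assoc, div_mul_eq_mul_div, ← sq, ← sq_abs, sq, mul_div_assoc,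
      div_self (abs_ne_zero.2 hu), mul_one]

lemma ite_min_one_div_abs_mul_sq (ℓ : ℕ) (u : ℝ) :
    (if u = 0 then 1 else min 1 ((2 : ℝ) ^ (-(ℓ : ℤ)) / |u|)) * u ^ 2 = clip ℓ u * u := by
  rcases eq_or_ne u 0 with rfl | hu
  · simp [clip]
  · have hu' : 0 < |u| := abs_pos.2 hu
    rw [if_neg hu, clip_mul_self, ← sq_abs, sq, ← mul_assoc, min_mul_of_nonneg _ _ hu'.le,
      one_mul, div_mul_cancel₀ _ hu'.ne']

lemma clip_mul_self_nonneg (ℓ : ℕ) (u : ℝ) : 0 ≤ clip ℓ u * u := by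
  rw [clip_mul_self]; positivity

lemma clip_mul_self_le_of_abs_le (ℓ : ℕ) {u b : ℝ} (hu : |u| ≤ b) :
    clip ℓ u * u ≤ b * (2 : ℝ) ^ (-(ℓ : ℤ)) := by
  rw [clip_mul_self, mul_comm b]
  exact mul_le_mul (min_le_right _ _) hu (abs_nonneg u) (by positivity)

theorem sum_mul_le_of_confidence_bounds {α : Type*} (T : Finset α) {b c ι B : ℝ} (hb : 0 ≤ b)
    (hc : 0 ≤ c) (hι : 0 ≤ ι) {w t e e' : α → ℝ} (hw : ∀ s ∈ T, |w s| ≤ c)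
    (hwt₀ : ∀ s ∈ T, 0 ≤ w s * t s) (hwt : ∀ s ∈ T, w s * t s ≤ b)
    (hee' : ∀ s, e s - e' s = t s)
    (he : |∑ s ∈ T, w s * e s| ≤ √(ι * ∑ s ∈ T, w s ^ 2 * e s ^ 2) + c * ι)
    (he' : |∑ s ∈ T, w s * e' s| ≤ √(ι * ∑ s ∈ T, w s ^ 2 * e' s ^ 2) + c * ι)
    (hB : ∑ s ∈ T, e s ^ 2 ≤ B) :
    ∑ s ∈ T, w s * t s ≤ 4 * c * √(ι * B) + (4 * c + b) * ι := by
  set S := ∑ s ∈ T, w s * t s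
  have hS : S = ∑ s ∈ T, w s * e s - ∑ s ∈ T, w s * e' s := by
    rw [← sum_sub_distrib]
    exact sum_congr rfl fun s _ => by rw [← mul_sub, hee']
  simp only [← mul_pow] at he he'
  have hP : √(ι * ∑ s ∈ T, (w s * e s) ^ 2) ≤ c * √(ι * B) := by
    have : ∑ s ∈ T, (w s * e s) ^ 2 ≤ c ^ 2 * B := by
      calc ∑ s ∈ T, (w s * e s) ^ 2 ≤ ∑ s ∈ T, c ^ 2 * e s ^ 2 :=
            sum_le_sum fun s hs => by
              rw [mul_pow]
              exact mul_le_mul_of_nonneg_right (sq_le_sq.2 ((hw s hs).trans (le_abs_self c)))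
                (sq_nonneg _)
        _ ≤ c ^ 2 * B := by rw [← mul_sum]; exact mul_le_mul_of_nonneg_left hB (sq_nonneg c)
    calc √(ι * ∑ s ∈ T, (w s * e s) ^ 2) ≤ √(c ^ 2 * (ι * B)) :=
          Real.sqrt_le_sqrt (by nlinarith)
      _ = c * √(ι * B) := by rw [Real.sqrt_mul (sq_nonneg c), Real.sqrt_sq hc]
  have hS₀ : 0 ≤ S := sum_nonneg hwt₀
  have hQ : √(ι * ∑ s ∈ T, (w s * t s) ^ 2) ≤ (b * ι + S) / 2 := by
    have : ∑ s ∈ T, (w s * t s) ^ 2 ≤ b * S := by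
      rw [mul_sum]
      exact sum_le_sum fun s hs => by nlinarith [hwt₀ s hs, hwt s hs]
    calc √(ι * ∑ s ∈ T, (w s * t s) ^ 2) ≤ √(b * ι * S) :=
          Real.sqrt_le_sqrt (by nlinarith)
      _ ≤ _ := sqrt_mul_le_add_div_two (by positivity) hS₀
  have hP' : √(ι * ∑ s ∈ T, (w s * e' s) ^ 2)
      ≤ √(ι * ∑ s ∈ T, (w s * e s) ^ 2) + √(ι * ∑ s ∈ T, (w s * t s) ^ 2) := by
    have he'_eq : ∀ s, w s * e' s = w s * e s - w s * t s := fun s => by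
      rw [← mul_sub, ← hee', sub_sub_cancel]
    simp only [Real.sqrt_mul hι, ← mul_add, he'_eq]
    gcongr
    exact sqrt_sum_sq_sub_le T _ _
  linarith [le_abs_self (∑ s ∈ T, w s * e s), neg_abs_le (∑ s ∈ T, w s * e' s)]

theorem voful2_confidence_property_one_general
    (d k ℓ : ℕ)
    (ι : ℝ) (hι : 1 ≤ ι) (A : ℝ) (hA : 0 ≤ A)
    (x : ℕ → EuclideanSpace ℝ (Fin d))
    (hx : ∀ s ∈ Finset.Icc 1 (k - 1), ‖x s‖ ≤ 1)
    (y : ℕ → ℝ)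
    (θstar θ : EuclideanSpace ℝ (Fin d)) (hθstar : ‖θstar‖ ≤ 1) (hθ : ‖θ‖ ≤ 1)
    (μ : EuclideanSpace ℝ (Fin d)) (hμ : μ = θ - θstar)
    (ε : ℕ → EuclideanSpace ℝ (Fin d) → ℝ)
    (hε : ∀ s ϑ, ε s ϑ = y s - x s ⬝ᵥ ϑ)
    (W : Matrix (Fin d) (Fin d) ℝ)
    (hW : W = (2 : ℝ) ^ (-(ℓ : ℤ)) • (1 : Matrix (Fin d) (Fin d) ℝ)
        + ∑ s ∈ Finset.Icc 1 (k - 1),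
            (if x s ⬝ᵥ μ = 0 then 1
              else min 1 ((2 : ℝ) ^ (-(ℓ : ℤ)) / |x s ⬝ᵥ μ|)) • Matrix.vecMulVec (x s) (x s))
    (ha : ∀ ϑ ∈ ({θstar, θ} : Set (EuclideanSpace ℝ (Fin d))),
        |∑ s ∈ Finset.Icc 1 (k - 1), clip ℓ (x s ⬝ᵥ μ) * ε s ϑ| ≤
          Real.sqrt (ι * ∑ s ∈ Finset.Icc 1 (k - 1), (clip ℓ (x s ⬝ᵥ μ)) ^ 2 * (ε s ϑ) ^ 2)
            + (2 : ℝ) ^ (-(ℓ : ℤ)) * ι)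
    (hb : ∑ s ∈ Finset.Icc 1 (k - 1), (ε s θstar) ^ 2 ≤ 8 * A + ι / 16) :
    μ ⬝ᵥ W *ᵥ μ ≤ (2 : ℝ) ^ (-(ℓ : ℤ)) * Real.sqrt (128 * A * ι)
      + 11 * (2 : ℝ) ^ (-(ℓ : ℤ)) * ι := by
  have hquad : μ ⬝ᵥ W *ᵥ μ = (2 : ℝ) ^ (-(ℓ : ℤ)) * (μ ⬝ᵥ μ)
      + ∑ s ∈ Finset.Icc 1 (k - 1), clip ℓ (x s ⬝ᵥ μ) * (x s ⬝ᵥ μ) := by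
    simp only [hW, dotProduct_mulVec_smul_one_add_sum_vecMulVec, ite_min_one_div_abs_mul_sq]
  set c : ℝ := (2 : ℝ) ^ (-(ℓ : ℤ))
  have hc : 0 < c := by positivity
  have hι0 : 0 ≤ ι := by linarith
  have hμ_norm : ‖μ‖ ≤ 2 := hμ ▸ (norm_sub_le θ θstar).trans (by linarith)
  have hμμ : μ ⬝ᵥ μ ≤ 4 := (le_abs_self _).trans
    ((abs_dotProduct_le_norm_mul_norm μ μ).trans (by nlinarith [norm_nonneg μ]))
  have hxμ : ∀ s ∈ Finset.Icc 1 (k - 1), |x s ⬝ᵥ μ| ≤ 2 := fun s hs =>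
    (abs_dotProduct_le_norm_mul_norm _ _).trans (by nlinarith [hx s hs, norm_nonneg (x s)])
  have hS := sum_mul_le_of_confidence_bounds _ (by positivity) hc.le hι0
    (fun s _ => (abs_clip ℓ _).trans_le (min_le_right _ _))
    (fun s _ => clip_mul_self_nonneg ℓ _) (fun s hs => clip_mul_self_le_of_abs_le ℓ (hxμ s hs))
    (fun s => by simp [hε, hμ, dotProduct_sub]) (ha θstar (by simp)) (ha θ (by simp)) hb
  rw [hquad]
  linarith [mul_le_mul_of_nonneg_left (four_mul_sqrt_mul_le hA hι0) hc.le,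
    mul_le_mul_of_nonneg_left hμμ hc.le, le_mul_of_one_le_right hc.le hι]

/-- Deterministic property (i) of the VOFUL2 confidence set: with `μ = θ − θ*`,
`ε s ϑ = y s − x sᵀϑ`, and
`W = 2^{−ℓ}·I + ∑_{s=1}^{k−1} min{1, 2^{−ℓ}/|x sᵀμ|}·x s (x s)ᵀ`
(the weight taken to be `1` when `x sᵀμ = 0`), assuming
(a) for each `ϑ ∈ {θ*, θ}`,
  `|∑_{s=1}^{k−1} ⌊x sᵀμ⌉_ℓ · ε s ϑ| ≤ √(ι·∑_{s=1}^{k−1} ⌊x sᵀμ⌉_ℓ²·(ε s ϑ)²) + 2^{−ℓ}·ι`,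
(b) `∑_{s=1}^{k−1} (ε s θ*)² ≤ 8A + ι/16`,
we have `μᵀWμ ≤ 2^{−ℓ}·√(128·A·ι) + 11·2^{−ℓ}·ι`. -/
theorem voful2_confidence_property_one
    (d k ℓ : ℕ) (hd : 1 ≤ d) (hk : 2 ≤ k) (hℓ : 1 ≤ ℓ)
    (ι : ℝ) (hι : 1 ≤ ι) (A : ℝ) (hA : 0 ≤ A)
    (x : ℕ → EuclideanSpace ℝ (Fin d))
    (hx : ∀ s ∈ Finset.Icc 1 (k - 1), ‖x s‖ ≤ 1)
    (y : ℕ → ℝ)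
    (θstar θ : EuclideanSpace ℝ (Fin d)) (hθstar : ‖θstar‖ ≤ 1) (hθ : ‖θ‖ ≤ 1)
    (μ : EuclideanSpace ℝ (Fin d)) (hμ : μ = θ - θstar)
    (ε : ℕ → EuclideanSpace ℝ (Fin d) → ℝ)
    (hε : ∀ s ϑ, ε s ϑ = y s - x s ⬝ᵥ ϑ)
    (W : Matrix (Fin d) (Fin d) ℝ)
    (hW : W = (2 : ℝ) ^ (-(ℓ : ℤ)) • (1 : Matrix (Fin d) (Fin d) ℝ)
        + ∑ s ∈ Finset.Icc 1 (k - 1),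
            (if x s ⬝ᵥ μ = 0 then 1
              else min 1 ((2 : ℝ) ^ (-(ℓ : ℤ)) / |x s ⬝ᵥ μ|)) • Matrix.vecMulVec (x s) (x s))
    (ha : ∀ ϑ ∈ ({θstar, θ} : Set (EuclideanSpace ℝ (Fin d))),
        |∑ s ∈ Finset.Icc 1 (k - 1), clip ℓ (x s ⬝ᵥ μ) * ε s ϑ| ≤
          Real.sqrt (ι * ∑ s ∈ Finset.Icc 1 (k - 1), (clip ℓ (x s ⬝ᵥ μ)) ^ 2 * (ε s ϑ) ^ 2)
            + (2 : ℝ) ^ (-(ℓ : ℤ)) * ι)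
    (hb : ∑ s ∈ Finset.Icc 1 (k - 1), (ε s θstar) ^ 2 ≤ 8 * A + ι / 16) :
    μ ⬝ᵥ W *ᵥ μ ≤ (2 : ℝ) ^ (-(ℓ : ℤ)) * Real.sqrt (128 * A * ι)
      + 11 * (2 : ℝ) ^ (-(ℓ : ℤ)) * ι :=
  voful2_confidence_property_one_general d k ℓ ι hι A hA x hx y θstar θ hθstar hθ μ hμ ε hε W hW ha
    hb
end

section
/- Let d ≥ 1, ℓ ≥ 1, i ≥ 1 be integers and ι ≥ 1 a real. Let T be a finite index set, and for each t ∈ T let x_t ∈ ℝ^d, z_t ∈ ℝ, and η_t ∈ [0, 2^{1−i}]. Let θ*, θ ∈ ℝ^d with ‖θ*‖_2 ≤ 1 and ‖θ‖_2 ≤ 1, set μ = θ − θ*, ε_t(ϑ) = x_tᵀϑ − z_t, and W = 2^{−ℓ}·I_d + Σ_{t∈T} min{1, 2^{−ℓ}/|x_tᵀμ|}·x_t x_tᵀ. Assume that for each ϑ ∈ {θ*, θ}: |Σ_{t∈T} ⌊x_tᵀμ⌉_ℓ · ε_t(ϑ)| ≤ 4·√(ι · Σ_{t∈T} ⌊x_tᵀμ⌉_ℓ²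 · η_t) + 4·2^{−ℓ}·ι. Then μᵀ W μ ≤ 12·2^{−ℓ}·(√(|T|·2^{−i}·ι) + ι). -/
/-!
Writing `c = 2^{−ℓ}`, the weight `min{1, c/|y|}` satisfies `min{1, c/|y|}·y² = ⌊y⌉_ℓ·y`, so
`μᵀWμ = c‖μ‖² + ∑ₜ ⌊xₜᵀμ⌉_ℓ·xₜᵀμ`. Since `xₜᵀμ = εₜ(θ) − εₜ(θ*)`, the sum is the difference of
the two sums controlled by the hypothesis, hence at most `8√(ι·S) + 8cι` with
`S = ∑ₜ ⌊xₜᵀμ⌉_ℓ²·ηₜ ≤ 2c²·|T|·2^{−i}`. As `8√2 ≤ 12` and `c‖μ‖² ≤ 4c ≤ 4cι`, the bound follows.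
-/

open Matrix Finset

/-- The weight of `x xᵀ` in `W`, as a function of `y = xᵀμ`. -/
noncomputable def clipWeight (ℓ : ℕ) (y : ℝ) : ℝ :=
  if y = 0 then 1 else min 1 ((2 : ℝ) ^ (-(ℓ : ℤ)) / |y|)

lemma abs_clip_le (ℓ : ℕ) (y : ℝ) : |clip ℓ y| ≤ (2 : ℝ) ^ (-(ℓ : ℤ)) := by
  have hc : (0 : ℝ) < (2 : ℝ) ^ (-(ℓ : ℤ)) := by positivity
  rcases eq_or_ne y 0 with rfl | hy
  · simp [clip]
  · rw [clip, abs_mul, abs_div, abs_abs, div_self (abs_ne_zero.2 hy), mul_one,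
      abs_of_nonneg (le_min (abs_nonneg _) hc.le)]
    exact min_le_right _ _

lemma clipWeight_mul_sq (ℓ : ℕ) (y : ℝ) : clipWeight ℓ y * y ^ 2 = clip ℓ y * y := by
  rcases eq_or_ne y 0 with rfl | hy
  · simp [clipWeight, clip]
  · have hy' : |y| ≠ 0 := abs_ne_zero.2 hy
    rw [clipWeight, if_neg hy, clip, ← div_self hy', min_div_div_right (abs_nonneg y)]
    field_simp

lemma dotProduct_vecMulVec_self_mulVec {n R : Type*} [Fintype n] [CommSemiring R]
    (x μ : n → R) : μ ⬝ᵥ vecMulVec x x *ᵥ μ = (x ⬝ᵥ μ) ^ 2 := by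
  rw [vecMulVec_mulVec, op_smul_eq_smul, dotProduct_smul, smul_eq_mul, dotProduct_comm, sq]

lemma dotProduct_smul_one_add_sum_smul_vecMulVec_mulVec {n ι R : Type*} [Fintype n]
    [DecidableEq n] [CommSemiring R] (c : R) (s : Finset ι) (w : ι → R) (x : ι → n → R)
    (μ : n → R) :
    μ ⬝ᵥ (c • (1 : Matrix n n R) + ∑ t ∈ s, w t • vecMulVec (x t) (x t)) *ᵥ μ
      = c * (μ ⬝ᵥ μ) + ∑ t ∈ s, w t * (x t ⬝ᵥ μ) ^ 2 := by
  simp only [add_mulVec, sum_mulVec, smul_mulVec, one_mulVec, dotProduct_add, dotProduct_sum,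
    dotProduct_smul, smul_eq_mul, dotProduct_vecMulVec_self_mulVec]

lemma dotProduct_self_le_four_of_norm_le_one {d : ℕ} {θ θ' : EuclideanSpace ℝ (Fin d)}
    (hθ : ‖θ‖ ≤ 1) (hθ' : ‖θ'‖ ≤ 1) : (θ - θ') ⬝ᵥ (θ - θ') ≤ 4 := by
  have hnorm : ‖θ - θ'‖ ≤ 2 := (norm_sub_le _ _).trans (by linarith)
  have hdot : (θ - θ') ⬝ᵥ (θ - θ') = ‖θ - θ'‖ ^ 2 := by
    rw [← real_inner_self_eq_norm_sq, EuclideanSpace.inner_eq_star_dotProduct, star_trivial,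
      WithLp.ofLp_sub]
  rw [hdot]
  nlinarith [norm_nonneg (θ - θ')]

lemma sum_sq_clip_mul_le {τ : Type*} {ℓ i : ℕ} {T : Finset τ} {y η : τ → ℝ}
    (hη : ∀ t ∈ T, η t ∈ Set.Icc (0 : ℝ) ((2 : ℝ) ^ (1 - (i : ℤ)))) :
    ∑ t ∈ T, clip ℓ (y t) ^ 2 * η t
      ≤ 2 * ((2 : ℝ) ^ (-(ℓ : ℤ))) ^ 2 * (T.card * (2 : ℝ) ^ (-(i : ℤ))) := by
  have h2i : (2 : ℝ) ^ (1 - (i : ℤ)) = 2 * (2 : ℝ) ^ (-(i : ℤ)) := by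
    rw [sub_eq_add_neg, zpow_add₀ two_ne_zero, zpow_one]
  have hterm : ∀ t ∈ T, clip ℓ (y t) ^ 2 * η t
      ≤ ((2 : ℝ) ^ (-(ℓ : ℤ))) ^ 2 * (2 * (2 : ℝ) ^ (-(i : ℤ))) := fun t ht => by
    rw [← h2i]
    exact mul_le_mul (sq_le_sq' (abs_le.1 (abs_clip_le ℓ _)).1 (abs_le.1 (abs_clip_le ℓ _)).2)
      (hη t ht).2 (hη t ht).1 (by positivity)
  calc ∑ t ∈ T, clip ℓ (y t) ^ 2 * η t
      ≤ T.card • (((2 : ℝ) ^ (-(ℓ : ℤ))) ^ 2 * (2 * (2 : ℝ) ^ (-(i : ℤ)))) :=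
        sum_le_card_nsmul _ _ _ hterm
    _ = _ := by rw [nsmul_eq_mul]; ring

lemma eight_mul_sqrt_le_twelve_mul_sqrt {S c N : ℝ} (hc : 0 ≤ c) (hS : S ≤ 2 * c ^ 2 * N) :
    8 * √S ≤ 12 * c * √N := by
  rcases le_or_gt N 0 with hN | hN
  · rw [Real.sqrt_eq_zero'.2 (hS.trans (mul_nonpos_of_nonneg_of_nonpos (by positivity) hN)),
      Real.sqrt_eq_zero'.2 hN]
    simp
  have h8 : 8 * √S = √(64 * S) := by
    rw [Real.sqrt_mul (by norm_num), show (64 : ℝ) = 8 ^ 2 by norm_num,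
      Real.sqrt_sq (by norm_num)]
  have h12 : 12 * c * √N = √((12 * c) ^ 2 * N) := by
    rw [Real.sqrt_mul (sq_nonneg _), Real.sqrt_sq (by positivity)]
  rw [h8, h12]
  exact Real.sqrt_le_sqrt (by nlinarith [sq_nonneg c])

theorem varlin2_confidence_property_one_general
    (d ℓ i : ℕ)
    (ι : ℝ) (hι : 1 ≤ ι)
    (T : Finset ℕ)
    (x : ℕ → EuclideanSpace ℝ (Fin d)) (z : ℕ → ℝ) (η : ℕ → ℝ)
    (hη : ∀ t ∈ T, η t ∈ Set.Icc (0 : ℝ) ((2 : ℝ) ^ (1 - (i : ℤ))))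
    (θstar θ : EuclideanSpace ℝ (Fin d)) (hθstar : ‖θstar‖ ≤ 1) (hθ : ‖θ‖ ≤ 1)
    (μ : EuclideanSpace ℝ (Fin d)) (hμ : μ = θ - θstar)
    (ε : ℕ → EuclideanSpace ℝ (Fin d) → ℝ)
    (hε : ∀ t ϑ, ε t ϑ = x t ⬝ᵥ ϑ - z t)
    (W : Matrix (Fin d) (Fin d) ℝ)
    (hW : W = (2 : ℝ) ^ (-(ℓ : ℤ)) • (1 : Matrix (Fin d) (Fin d) ℝ)
        + ∑ t ∈ T,
            (if x t ⬝ᵥ μ = 0 then 1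
              else min 1 ((2 : ℝ) ^ (-(ℓ : ℤ)) / |x t ⬝ᵥ μ|)) • Matrix.vecMulVec (x t) (x t))
    (ha : ∀ ϑ ∈ ({θstar, θ} : Set (EuclideanSpace ℝ (Fin d))),
        |∑ t ∈ T, clip ℓ (x t ⬝ᵥ μ) * ε t ϑ| ≤
          4 * Real.sqrt (ι * ∑ t ∈ T, (clip ℓ (x t ⬝ᵥ μ)) ^ 2 * η t)
            + 4 * (2 : ℝ) ^ (-(ℓ : ℤ)) * ι) :
    μ ⬝ᵥ W *ᵥ μ ≤ 12 * (2 : ℝ) ^ (-(ℓ : ℤ))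
      * (Real.sqrt ((T.card : ℝ) * (2 : ℝ) ^ (-(i : ℤ)) * ι) + ι) := by
  set c : ℝ := (2 : ℝ) ^ (-(ℓ : ℤ))
  set S := ∑ t ∈ T, clip ℓ (x t ⬝ᵥ μ) ^ 2 * η t
  have hc : 0 < c := by positivity
  have hquad : μ ⬝ᵥ W *ᵥ μ = c * (μ ⬝ᵥ μ) + ∑ t ∈ T, clip ℓ (x t ⬝ᵥ μ) * (x t ⬝ᵥ μ) := by
    rw [hW, dotProduct_smul_one_add_sum_smul_vecMulVec_mulVec]
    exact congrArg _ (sum_congr rfl fun t _ => clipWeight_mul_sq ℓ _)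
  have hdiff : ∑ t ∈ T, clip ℓ (x t ⬝ᵥ μ) * (x t ⬝ᵥ μ)
      = ∑ t ∈ T, clip ℓ (x t ⬝ᵥ μ) * ε t θ - ∑ t ∈ T, clip ℓ (x t ⬝ᵥ μ) * ε t θstar := by
    rw [← sum_sub_distrib]
    refine sum_congr rfl fun t _ => ?_
    rw [hε, hε, hμ, WithLp.ofLp_sub, dotProduct_sub]
    ring
  have hcross : ∑ t ∈ T, clip ℓ (x t ⬝ᵥ μ) * (x t ⬝ᵥ μ) ≤ 8 * √(ι * S) + 8 * c * ι := by
    rw [hdiff]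
    refine ((le_abs_self _).trans (abs_sub _ _)).trans ?_
    linarith [ha θ (Or.inr rfl), ha θstar (Or.inl rfl)]
  have hsqrt : 8 * √(ι * S) ≤ 12 * c * √(T.card * (2 : ℝ) ^ (-(i : ℤ)) * ι) := by
    refine eight_mul_sqrt_le_twelve_mul_sqrt hc.le ?_
    nlinarith [sum_sq_clip_mul_le (ℓ := ℓ) (y := fun t => x t ⬝ᵥ μ) hη]
  have hnorm : μ ⬝ᵥ μ ≤ 4 := hμ ▸ dotProduct_self_le_four_of_norm_le_one hθ hθstar
  have hridge : c * (μ ⬝ᵥ μ) ≤ 4 * c * ι := by nlinarith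
  rw [hquad]
  linarith

/-- Deterministic property (i) of the VARLin2 confidence set in generic form:
with `μ = θ − θ*`, `ε t ϑ = x tᵀϑ − z t`, variances `η t ∈ [0, 2^{1−i}]`, and
`W = 2^{−ℓ}·I + ∑_{t∈T} min{1, 2^{−ℓ}/|x tᵀμ|}·x t (x t)ᵀ`
(the weight taken to be `1` when `x tᵀμ = 0`), assuming for each `ϑ ∈ {θ*, θ}`
`|∑_{t∈T} ⌊x tᵀμ⌉_ℓ · ε t ϑ| ≤ 4·√(ι·∑_{t∈T} ⌊x tᵀμ⌉_ℓ²·η t) + 4·2^{−ℓ}·ι`,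
we have `μᵀWμ ≤ 12·2^{−ℓ}·(√(|T|·2^{−i}·ι) + ι)`. -/
theorem varlin2_confidence_property_one
    (d ℓ i : ℕ) (hd : 1 ≤ d) (hℓ : 1 ≤ ℓ) (hi : 1 ≤ i)
    (ι : ℝ) (hι : 1 ≤ ι)
    (T : Finset ℕ)
    (x : ℕ → EuclideanSpace ℝ (Fin d)) (z : ℕ → ℝ) (η : ℕ → ℝ)
    (hη : ∀ t ∈ T, η t ∈ Set.Icc (0 : ℝ) ((2 : ℝ) ^ (1 - (i : ℤ))))
    (θstar θ : EuclideanSpace ℝ (Fin d)) (hθstar : ‖θstar‖ ≤ 1) (hθ : ‖θ‖ ≤ 1)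
    (μ : EuclideanSpace ℝ (Fin d)) (hμ : μ = θ - θstar)
    (ε : ℕ → EuclideanSpace ℝ (Fin d) → ℝ)
    (hε : ∀ t ϑ, ε t ϑ = x t ⬝ᵥ ϑ - z t)
    (W : Matrix (Fin d) (Fin d) ℝ)
    (hW : W = (2 : ℝ) ^ (-(ℓ : ℤ)) • (1 : Matrix (Fin d) (Fin d) ℝ)
        + ∑ t ∈ T,
            (if x t ⬝ᵥ μ = 0 then 1
              else min 1 ((2 : ℝ) ^ (-(ℓ : ℤ)) / |x t ⬝ᵥ μ|)) • Matrix.vecMulVec (x t) (x t))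
    (ha : ∀ ϑ ∈ ({θstar, θ} : Set (EuclideanSpace ℝ (Fin d))),
        |∑ t ∈ T, clip ℓ (x t ⬝ᵥ μ) * ε t ϑ| ≤
          4 * Real.sqrt (ι * ∑ t ∈ T, (clip ℓ (x t ⬝ᵥ μ)) ^ 2 * η t)
            + 4 * (2 : ℝ) ^ (-(ℓ : ℤ)) * ι) :
    μ ⬝ᵥ W *ᵥ μ ≤ 12 * (2 : ℝ) ^ (-(ℓ : ℤ))
      * (Real.sqrt ((T.card : ℝ) * (2 : ℝ) ^ (-(i : ℤ)) * ι) + ι) :=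
  varlin2_confidence_property_one_general d ℓ i ι hι T x z η hη θstar θ hθstar hθ μ hμ ε hε W hW ha
end

section
/- Let (F_i)_{i=0}^{n} be a filtration on a probability space and let X_1, …, X_n be real random variables such that X_i is F_i-measurable and |X_i| ≤ 1 almost surely. Then for every δ ∈ (0, 1): P[ Σ_{i=1}^{n} X_i² ≥ 8·Σ_{i=1}^{n} E[X_i² | F_{i−1}] + 4·ln(4/δ) ] ≤ (⌈log₂(n)⌉ + 1)·δ. -/
open MeasureTheory Finset Real

/-!
For `Y i = X i ^ 2 ∈ [0, 1]`, convexity gives `exp (t * Y) ≤ 1 + (exp t - 1) * Y`, hence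
`E[exp (t * Y i) | F (i - 1)] ≤ exp ((exp t - 1) * E[Y i | F (i - 1)])`. Therefore
`exp (∑ (t * Y i - (exp t - 1) * E[Y i | F (i - 1)]))` is a supermartingale started at `1`, so its
expectation is at most `1`. At `t = log 2` the event of the theorem forces it above `1 / δ`, and
Markov's inequality bounds the probability by `δ`, which is already below `(⌈log₂ n⌉ + 1) * δ`.
-/

theorem Real.exp_mul_le_one_add_mul {t y : ℝ} (hy0 : 0 ≤ y) (hy1 : y ≤ 1) :
    exp (t * y) ≤ 1 + (exp t - 1) * y := by
  have h := convexOn_exp.2 (Set.mem_univ 0) (Set.mem_univ t) (sub_nonneg.2 hy1) hy0 (by ring)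
  simp only [smul_eq_mul, mul_zero, zero_add, exp_zero, mul_one] at h
  rw [mul_comm t y]
  linarith

theorem Real.inv_le_exp_log_two_mul_sub {S T δ : ℝ} (hT : 0 ≤ T) (hδ0 : 0 < δ) (hδ4 : δ ≤ 4)
    (h : 8 * T + 4 * log (4 / δ) ≤ S) : δ⁻¹ ≤ exp (log 2 * S - T) := by
  have hlog2 : 1 / 4 < log 2 := by linarith [log_two_gt_d9]
  have hlog4 : 0 ≤ log (4 / δ) := log_nonneg (by rw [le_div_iff₀ hδ0]; linarith)
  have hlog_inv : log δ⁻¹ ≤ log (4 / δ) := by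
    rw [← one_div]; gcongr; norm_num
  calc δ⁻¹ = exp (log δ⁻¹) := (exp_log (inv_pos.2 hδ0)).symm
    _ ≤ exp (log 2 * S - T) := by
      gcongr
      nlinarith [mul_le_mul_of_nonneg_left h (log_nonneg one_le_two)]

namespace MeasureTheory

section

variable {Ω : Type*} {m m0 : MeasurableSpace Ω} {μ : Measure Ω}

theorem integrable_mul_exp_sub_condExp {G Y : Ω → ℝ} (hG : Integrable G μ)
    (hY : AEStronglyMeasurable Y μ) (hY0 : 0 ≤ᵐ[μ] Y) (hY1 : Y ≤ᵐ[μ] 1) {t : ℝ} (ht : 0 ≤ t) :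
    Integrable (fun ω => G ω * exp (t * Y ω - (exp t - 1) * μ[Y | m] ω)) μ := by
  refine hG.mul_bdd (c := exp t) (continuous_exp.comp_aestronglyMeasurable
    ((hY.const_mul t).sub (integrable_condExp.aestronglyMeasurable.const_mul _))) ?_
  filter_upwards [hY1, condExp_nonneg (m := m) hY0] with ω h1 hE
  rw [norm_of_nonneg (exp_pos _).le, exp_le_exp]
  have hc : 0 ≤ exp t - 1 := sub_nonneg.2 (one_le_exp ht)
  nlinarith [mul_nonneg hc hE, mul_le_of_le_one_right ht h1]

variable [IsFiniteMeasure μ]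

theorem integrable_exp_mul {Y : Ω → ℝ} (hY : AEStronglyMeasurable Y μ) (hY0 : 0 ≤ᵐ[μ] Y)
    (hY1 : Y ≤ᵐ[μ] 1) (t : ℝ) : Integrable (fun ω => exp (t * Y ω)) μ :=
  .of_bound (continuous_exp.comp_aestronglyMeasurable (hY.const_mul t)) (exp |t|) <| by
    filter_upwards [hY0, hY1] with ω h0 h1
    rw [norm_of_nonneg (exp_pos _).le, exp_le_exp]
    calc t * Y ω ≤ |t| * Y ω := by gcongr; exact le_abs_self t
      _ ≤ |t| := mul_le_of_le_one_right (abs_nonneg t) h1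

theorem condExp_exp_mul_le_exp_condExp (hm : m ≤ m0) {Y : Ω → ℝ} (hY : AEStronglyMeasurable Y μ)
    (hY0 : 0 ≤ᵐ[μ] Y) (hY1 : Y ≤ᵐ[μ] 1) (t : ℝ) :
    μ[fun ω => exp (t * Y ω) | m] ≤ᵐ[μ] fun ω => exp ((exp t - 1) * μ[Y | m] ω) := by
  have hYint : Integrable Y μ := .of_bound hY 1 <| by
    filter_upwards [hY0, hY1] with ω h0 h1
    rwa [norm_of_nonneg h0]
  have hmono : μ[fun ω => exp (t * Y ω) | m] ≤ᵐ[μ] μ[(fun _ => 1) + (exp t - 1) • Y | m] :=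
    condExp_mono (integrable_exp_mul hY hY0 hY1 t)
      ((integrable_const 1).add (hYint.smul _)) <| by
      filter_upwards [hY0, hY1] with ω h0 h1
      exact exp_mul_le_one_add_mul h0 h1
  filter_upwards [hmono, condExp_add (integrable_const 1) (hYint.smul (exp t - 1)) m,
    condExp_smul (exp t - 1) Y m] with ω hle hadd hsmul
  rw [hadd, Pi.add_apply, hsmul, condExp_const hm] at hle
  exact hle.trans (by simpa [add_comm] using add_one_le_exp ((exp t - 1) * μ[Y | m] ω))

theorem integral_mul_exp_sub_condExp_le (hm : m ≤ m0) {G Y : Ω → ℝ}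
    (hGm : StronglyMeasurable[m] G) (hG0 : 0 ≤ᵐ[μ] G) (hG : Integrable G μ)
    (hY : AEStronglyMeasurable Y μ) (hY0 : 0 ≤ᵐ[μ] Y) (hY1 : Y ≤ᵐ[μ] 1) {t : ℝ} (ht : 0 ≤ t) :
    ∫ ω, G ω * exp (t * Y ω - (exp t - 1) * μ[Y | m] ω) ∂μ ≤ ∫ ω, G ω ∂μ := by
  set E := μ[Y | m]
  set H : Ω → ℝ := fun ω => G ω * exp (-((exp t - 1) * E ω))
  have hHm : StronglyMeasurable[m] H :=
    hGm.mul (continuous_exp.comp_stronglyMeasurable (stronglyMeasurable_condExp.const_mul _).neg)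
  have hsplit : (fun ω => G ω * exp (t * Y ω - (exp t - 1) * E ω)) =
      fun ω => H ω * exp (t * Y ω) := by
    ext ω; rw [sub_eq_neg_add, exp_add]; ring
  have hprod_int : Integrable (fun ω => H ω * exp (t * Y ω)) μ :=
    hsplit ▸ integrable_mul_exp_sub_condExp hG hY hY0 hY1 ht
  have hpull : μ[fun ω => H ω * exp (t * Y ω) | m] =ᵐ[μ]
      fun ω => H ω * μ[fun ω => exp (t * Y ω) | m] ω :=
    condExp_mul_of_stronglyMeasurable_left hHm hprod_int (integrable_exp_mul hY hY0 hY1 t)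
  have hbound : (fun ω => H ω * μ[fun ω => exp (t * Y ω) | m] ω) ≤ᵐ[μ] G := by
    filter_upwards [condExp_exp_mul_le_exp_condExp hm hY hY0 hY1 t, hG0] with ω h hG0
    calc H ω * μ[fun ω => exp (t * Y ω) | m] ω ≤ H ω * exp ((exp t - 1) * E ω) :=
          mul_le_mul_of_nonneg_left h (mul_nonneg hG0 (exp_pos _).le)
      _ = G ω := by rw [mul_assoc, ← exp_add, neg_add_cancel, exp_zero, mul_one]
  calc ∫ ω, G ω * exp (t * Y ω - (exp t - 1) * E ω) ∂μ
      = ∫ ω, μ[fun ω => H ω * exp (t * Y ω) | m] ω ∂μ := by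
        rw [hsplit, integral_condExp hm]
    _ = ∫ ω, H ω * μ[fun ω => exp (t * Y ω) | m] ω ∂μ := integral_congr_ae hpull
    _ ≤ ∫ ω, G ω ∂μ := integral_mono_ae (integrable_condExp.congr hpull) hG hbound

theorem measure_inv_le_le_of_integral_le_one {f : Ω → ℝ} (hf0 : 0 ≤ᵐ[μ] f)
    (hf : Integrable f μ) (hf1 : ∫ ω, f ω ∂μ ≤ 1) {δ : ℝ} (hδ : 0 < δ) :
    μ {ω | δ⁻¹ ≤ f ω} ≤ ENNReal.ofReal δ := by
  have hmarkov := (mul_meas_ge_le_integral_of_nonneg hf0 hf δ⁻¹).trans hf1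
  rw [← ENNReal.ofReal_toReal (measure_ne_top μ _)]
  refine ENNReal.ofReal_le_ofReal ?_
  rwa [inv_mul_le_iff₀ hδ, mul_one] at hmarkov

end

variable {Ω : Type*} {m0 : MeasurableSpace Ω}

noncomputable def expCompensated (μ : Measure Ω) (F : Filtration ℕ m0) (Y : ℕ → Ω → ℝ) (t : ℝ)
    (n : ℕ) (ω : Ω) : ℝ :=
  exp (∑ i ∈ Icc 1 n, (t * Y i ω - (exp t - 1) * μ[Y i | F (i - 1)] ω))

variable {μ : Measure Ω} {F : Filtration ℕ m0} {Y : ℕ → Ω → ℝ} {t : ℝ}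

theorem expCompensated_zero : expCompensated μ F Y t 0 = 1 := by
  ext ω; simp [expCompensated]

theorem expCompensated_succ (n : ℕ) (ω : Ω) :
    expCompensated μ F Y t (n + 1) ω = expCompensated μ F Y t n ω *
      exp (t * Y (n + 1) ω - (exp t - 1) * μ[Y (n + 1) | F n] ω) := by
  rw [expCompensated, sum_Icc_succ_top (Nat.le_add_left 1 n), exp_add, Nat.add_sub_cancel,
    expCompensated]

theorem stronglyMeasurable_expCompensated {n : ℕ}
    (hY : ∀ i ∈ Icc 1 n, StronglyMeasurable[F i] (Y i)) :
    StronglyMeasurable[F n] (expCompensated μ F Y t n) := by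
  refine continuous_exp.comp_stronglyMeasurable (stronglyMeasurable_fun_sum _ fun i hi => ?_)
  have hin : i ≤ n := (mem_Icc.1 hi).2
  exact (((hY i hi).mono (F.mono hin)).const_mul t).sub
    ((stronglyMeasurable_condExp.mono (F.mono (i.sub_le 1 |>.trans hin))).const_mul _)

theorem integrable_expCompensated [IsFiniteMeasure μ] (ht : 0 ≤ t) {n : ℕ}
    (hY : ∀ i ∈ Icc 1 n, StronglyMeasurable[F i] (Y i)) (hY0 : ∀ i ∈ Icc 1 n, 0 ≤ᵐ[μ] Y i)
    (hY1 : ∀ i ∈ Icc 1 n, Y i ≤ᵐ[μ] 1) :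
    Integrable (expCompensated μ F Y t n) μ := by
  induction n with
  | zero => rw [expCompensated_zero]; exact integrable_const 1
  | succ n ih =>
    have hsub : Icc 1 n ⊆ Icc 1 (n + 1) := Icc_subset_Icc_right n.le_succ
    have hlast : n + 1 ∈ Icc 1 (n + 1) := right_mem_Icc.2 (Nat.le_add_left 1 n)
    refine (integrable_mul_exp_sub_condExp (m := F n)
      (ih (fun i hi => hY i (hsub hi)) (fun i hi => hY0 i (hsub hi)) fun i hi => hY1 i (hsub hi))
      ((hY _ hlast).mono (F.le _)).aestronglyMeasurable (hY0 _ hlast) (hY1 _ hlast) ht).congr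
      (ae_of_all _ fun ω => (expCompensated_succ n ω).symm)

theorem integral_expCompensated_le_one [IsProbabilityMeasure μ] (ht : 0 ≤ t) {n : ℕ}
    (hY : ∀ i ∈ Icc 1 n, StronglyMeasurable[F i] (Y i)) (hY0 : ∀ i ∈ Icc 1 n, 0 ≤ᵐ[μ] Y i)
    (hY1 : ∀ i ∈ Icc 1 n, Y i ≤ᵐ[μ] 1) :
    ∫ ω, expCompensated μ F Y t n ω ∂μ ≤ 1 := by
  induction n with
  | zero => simp [expCompensated_zero]
  | succ n ih =>
    have hsub : Icc 1 n ⊆ Icc 1 (n + 1) := Icc_subset_Icc_right n.le_succ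
    have hlast : n + 1 ∈ Icc 1 (n + 1) := right_mem_Icc.2 (Nat.le_add_left 1 n)
    have hY' := fun i hi => hY i (hsub hi)
    have hY0' := fun i hi => hY0 i (hsub hi)
    have hY1' := fun i hi => hY1 i (hsub hi)
    calc ∫ ω, expCompensated μ F Y t (n + 1) ω ∂μ
        = ∫ ω, expCompensated μ F Y t n ω *
            exp (t * Y (n + 1) ω - (exp t - 1) * μ[Y (n + 1) | F n] ω) ∂μ := by
          simp_rw [expCompensated_succ]
      _ ≤ ∫ ω, expCompensated μ F Y t n ω ∂μ :=
          integral_mul_exp_sub_condExp_le (F.le n) (stronglyMeasurable_expCompensated hY')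
            (ae_of_all _ fun ω => (exp_pos _).le) (integrable_expCompensated ht hY' hY0' hY1')
            ((hY _ hlast).mono (F.le _)).aestronglyMeasurable (hY0 _ hlast) (hY1 _ hlast) ht
      _ ≤ 1 := ih hY' hY0' hY1'

end MeasureTheory

/-- Concentration of the sum of squares of a bounded adapted sequence around the sum of
its conditional second moments (Lemma 17 of Zhang et al. (2021)): for an adapted
sequence `X` with `|X i| ≤ 1` a.s. and every `δ ∈ (0,1)`,
`P[∑_{i=1}^n X i² ≥ 8·∑_{i=1}^n E[X i² | F (i−1)] + 4·ln(4/δ)] ≤ (⌈log₂ n⌉ + 1)·δ`. -/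
theorem sum_sq_concentration
    {Ω : Type*} {m0 : MeasurableSpace Ω} (μ : Measure Ω) [IsProbabilityMeasure μ]
    (F : Filtration ℕ m0) (n : ℕ)
    (X : ℕ → Ω → ℝ)
    (hmeas : ∀ i ∈ Finset.Icc 1 n, StronglyMeasurable[F i] (X i))
    (hbdd : ∀ i ∈ Finset.Icc 1 n, ∀ᵐ ω ∂μ, |X i ω| ≤ 1)
    (δ : ℝ) (hδ : δ ∈ Set.Ioo (0 : ℝ) 1) :
    μ {ω | 8 * ∑ i ∈ Finset.Icc 1 n, (μ[fun ω' => (X i ω') ^ 2 | F (i - 1)]) ω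
          + 4 * Real.log (4 / δ)
        ≤ ∑ i ∈ Finset.Icc 1 n, (X i ω) ^ 2}
      ≤ ENNReal.ofReal ((⌈Real.logb 2 n⌉ + 1) * δ) := by
  obtain ⟨hδ0, hδ1⟩ := hδ
  set Y : ℕ → Ω → ℝ := fun i ω => X i ω ^ 2
  have hY : ∀ i ∈ Icc 1 n, StronglyMeasurable[F i] (Y i) := fun i hi => (hmeas i hi).pow 2
  have hY0 : ∀ i ∈ Icc 1 n, 0 ≤ᵐ[μ] Y i := fun i _ => ae_of_all _ fun ω => sq_nonneg (X i ω)
  have hY1 : ∀ i ∈ Icc 1 n, Y i ≤ᵐ[μ] 1 := fun i hi =>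
    (hbdd i hi).mono fun ω => (sq_le_one_iff_abs_le_one (X i ω)).2
  have hevent : {ω | 8 * ∑ i ∈ Icc 1 n, μ[Y i | F (i - 1)] ω + 4 * log (4 / δ)
      ≤ ∑ i ∈ Icc 1 n, Y i ω} ≤ᵐ[μ] {ω | δ⁻¹ ≤ expCompensated μ F Y (log 2) n ω} := by
    filter_upwards [(Filter.eventually_all_finset _).2 fun i hi =>
      condExp_nonneg (m := F (i - 1)) (hY0 i hi)] with ω hE hω
    change δ⁻¹ ≤ expCompensated μ F Y (log 2) n ω
    rw [expCompensated, exp_log two_pos, sum_sub_distrib, ← mul_sum, ← mul_sum,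
      show (2 : ℝ) - 1 = 1 by norm_num, one_mul]
    exact inv_le_exp_log_two_mul_sub (sum_nonneg hE) hδ0 (by linarith) hω
  calc _ ≤ μ {ω | δ⁻¹ ≤ expCompensated μ F Y (log 2) n ω} := measure_mono_ae hevent
    _ ≤ ENNReal.ofReal δ :=
      measure_inv_le_le_of_integral_le_one (ae_of_all _ fun ω => (exp_pos _).le)
        (integrable_expCompensated (log_nonneg one_le_two) hY hY0 hY1)
        (integral_expCompensated_le_one (log_nonneg one_le_two) hY hY0 hY1) hδ0
    _ ≤ _ := by
      refine ENNReal.ofReal_le_ofReal (le_mul_of_one_le_left hδ0.le ?_)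
      have hlogb : 0 ≤ logb 2 n := div_nonneg (log_natCast_nonneg n) (log_nonneg one_le_two)
      have : (0 : ℝ) ≤ ⌈logb 2 n⌉ := Int.cast_nonneg (Int.ceil_nonneg hlogb)
      linarith
end

section
/- Let (F_i)_{i=0}^{n} be a filtration on a probability space, n ≥ 2, and let X_1, …, X_n be real random variables such that X_i is F_i-measurable, E[X_i | F_{i−1}] = 0, and |X_i| ≤ b almost surely for some b > 0. Then for every δ ∈ (0, e^{−1}): P( |Σ_{i=1}^{n} X_i| ≤ 8·√(Σ_{i=1}^{n} X_i² · ln(1/δ)) + 16·b·ln(1/δ) ) ≥ 1 − 6·δ·log₂(n). -/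
/-!
For `y ≥ -1/2` one has `exp (y - y²) ≤ 1 + y`. Hence, if `|t| ≤ 1/(2b)`, the products
`∏ᵢ exp (t Xᵢ - t² Xᵢ²) = exp (t Sₖ - t² Vₖ)`, with `Sₖ = ∑ Xᵢ` and `Vₖ = ∑ Xᵢ²`, have expectation
at most `1` (each factor has conditional expectation at most `1 + t E[Xᵢ | Fᵢ₋₁] = 1`), and Markov
gives `P (t Sₙ - t² Vₙ ≥ L) ≤ e^{-L}`. Off that event `±Sₙ ≤ c L + Vₙ / c` with `c = 1/|t|`. The
best `c`, namely `√(Vₙ / L)`, is random, so take a union bound over the dyadic grid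
`c = 2b·2ʲ`, `j ≤ ⌈log₂ n⌉`, which reaches `√(Vₙ / L)` because `Vₙ ≤ n b²`; the grid point just
above the optimum loses only a constant factor.
-/

open MeasureTheory Finset

namespace Real

theorem exp_sub_sq_le_one_add {y : ℝ} (hy : -1 / 2 ≤ y) : exp (y - y ^ 2) ≤ 1 + y := by
  have hprod : exp (y - y ^ 2) * exp (y ^ 2 - y) = 1 := by rw [← exp_add]; ring_nf; exact exp_zero
  suffices h : 1 ≤ (1 + y) * exp (y ^ 2 - y) by
    have := exp_pos (y ^ 2 - y)
    nlinarith
  rcases le_total 0 y with hy0 | hy0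
  · nlinarith [add_one_le_exp (y ^ 2 - y), pow_nonneg hy0 3]
  · have hq := quadratic_le_exp_of_nonneg (x := y ^ 2 - y) (by nlinarith)
    nlinarith [mul_le_mul_of_nonneg_left hq (by linarith : (0 : ℝ) ≤ 1 + y),
      mul_nonneg (mul_nonneg (neg_nonneg.mpr hy0) (neg_nonneg.mpr hy0)) (neg_nonneg.mpr hy0)]

theorem exp_sub_sq_le (y : ℝ) : exp (y - y ^ 2) ≤ exp (1 / 4) :=
  exp_le_exp.mpr (by nlinarith [sq_nonneg (y - 1 / 2)])

theorem one_lt_log_one_div {δ : ℝ} (hδ : 0 < δ) (hδe : δ < (exp 1)⁻¹) : 1 < log (1 / δ) := by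
  rw [one_div, log_inv, lt_neg, ← log_exp (-1), exp_neg]
  exact log_lt_log hδ hδe

end Real

theorem exists_le_two_pow_le_max {x : ℝ} {J : ℕ} (hx : x ≤ 2 ^ J) :
    ∃ j ≤ J, x ≤ 2 ^ j ∧ (2 : ℝ) ^ j ≤ max 1 (2 * x) := by
  induction J with
  | zero => exact ⟨0, le_rfl, by simpa using hx, by simp⟩
  | succ J ih =>
    by_cases hxJ : x ≤ 2 ^ J
    · obtain ⟨j, hj, hxj⟩ := ih hxJ
      exact ⟨j, hj.trans J.le_succ, hxj⟩
    · refine ⟨J + 1, le_rfl, hx, le_max_of_le_right ?_⟩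
      rw [pow_succ]
      linarith

theorem le_three_sqrt_mul_add_of_forall_dyadic {c L V s : ℝ} {J : ℕ} (hc : 0 < c) (hL : 0 < L)
    (hV : 0 ≤ V) (hJ : √(V / L) ≤ c * 2 ^ J)
    (h : ∀ j ≤ J, s ≤ c * 2 ^ j * L + V / (c * 2 ^ j)) :
    s ≤ 3 * √(V * L) + c * L := by
  -- `r` minimises `c ↦ c * L + V / c`
  set r := √(V / L)
  have hrL : r * L = √(V * L) := by
    rw [← Real.sqrt_sq hL.le, ← Real.sqrt_mul (by positivity), Real.sqrt_sq hL.le]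
    field_simp
  have hrV : r * √(V * L) = V := by
    rw [← Real.sqrt_mul (by positivity), show V / L * (V * L) = V ^ 2 by field_simp,
      Real.sqrt_sq hV]
  obtain ⟨j, hj, hrj, hjr⟩ := exists_le_two_pow_le_max (x := r / c)
    (by rw [div_le_iff₀ hc]; linarith)
  rw [div_le_iff₀ hc, mul_comm] at hrj
  have hjmax : c * 2 ^ j ≤ c + 2 * r := by
    have := mul_le_mul_of_nonneg_left hjr hc.le
    rw [mul_max_of_nonneg _ _ hc.le, mul_one,
      show c * (2 * (r / c)) = 2 * r by field_simp] at this
    exact this.trans (max_le_add_of_nonneg hc.le (by positivity))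
  have hfirst : c * 2 ^ j * L ≤ c * L + 2 * √(V * L) := by
    rw [← hrL]; nlinarith
  have hsecond : V / (c * 2 ^ j) ≤ √(V * L) := by
    rw [div_le_iff₀ (by positivity)]
    nlinarith [Real.sqrt_nonneg (V * L)]
  linarith [h j hj]

theorem abs_le_mul_add_div_of_lt {c L V s : ℝ} (hc : 0 < c)
    (hpos : c⁻¹ * s - c⁻¹ ^ 2 * V < L) (hneg : -c⁻¹ * s - (-c⁻¹) ^ 2 * V < L) :
    |s| ≤ c * L + V / c := by
  have key : ∀ u : ℝ, c⁻¹ * u - c⁻¹ ^ 2 * V < L → u ≤ c * L + V / c := fun u hu => by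
    have := mul_lt_mul_of_pos_left hu hc
    rw [mul_sub, ← mul_assoc, mul_inv_cancel₀ hc.ne', one_mul,
      show c * (c⁻¹ ^ 2 * V) = V / c by field_simp] at this
    linarith
  exact abs_le.mpr ⟨by linarith [key (-s) (by simpa using hneg)], key s hpos⟩

theorem Nat.clog_two_add_one_le_three_mul_logb {n : ℕ} (hn : 2 ≤ n) :
    (Nat.clog 2 n : ℝ) + 1 ≤ 3 * Real.logb 2 n := by
  have hlog : 1 ≤ Real.logb 2 n := by
    rw [Real.le_logb_iff_rpow_le one_lt_two (by positivity), Real.rpow_one]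
    exact_mod_cast hn
  have hclog : (Nat.clog 2 n : ℝ) < Real.logb 2 n + 1 := by
    rw [← Real.natCeil_logb_natCast]
    push_cast
    exact Nat.ceil_lt_add_one (by linarith)
  linarith

theorem abs_le_eight_sqrt_mul_add_of_forall_lt {b L V s : ℝ} {n : ℕ} (hb : 0 < b) (hL : 1 ≤ L)
    (hV0 : 0 ≤ V) (hV : V ≤ n * b ^ 2)
    (h : ∀ j ≤ Nat.clog 2 n, (2 * b * 2 ^ j)⁻¹ * s - (2 * b * 2 ^ j)⁻¹ ^ 2 * V < L ∧
      -(2 * b * 2 ^ j)⁻¹ * s - (-(2 * b * 2 ^ j)⁻¹) ^ 2 * V < L) :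
    |s| ≤ 8 * √(V * L) + 16 * b * L := by
  have hgrid : √(V / L) ≤ 2 * b * 2 ^ Nat.clog 2 n := by
    rw [Real.sqrt_le_left (by positivity)]
    calc V / L ≤ V := div_le_self hV0 hL
      _ ≤ n * b ^ 2 := hV
      _ ≤ 2 ^ Nat.clog 2 n * b ^ 2 := by gcongr; exact_mod_cast Nat.le_pow_clog one_lt_two n
      _ ≤ (2 * b * 2 ^ Nat.clog 2 n) ^ 2 := by
        nlinarith [one_le_pow₀ (M₀ := ℝ) one_le_two (n := Nat.clog 2 n)]
  have := le_three_sqrt_mul_add_of_forall_dyadic (by positivity) (by linarith) hV0 hgrid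
    fun j hj => abs_le_mul_add_div_of_lt (by positivity) (h j hj).1 (h j hj).2
  linarith [Real.sqrt_nonneg (V * L), mul_pos hb (zero_lt_one.trans_le hL)]

namespace MeasureTheory

variable {Ω : Type*} {m0 : MeasurableSpace Ω} {μ : Measure Ω}

theorem integrable_finset_prod_of_abs_le [IsFiniteMeasure μ] {ι : Type*} {s : Finset ι}
    {Y : ι → Ω → ℝ} {C : ℝ} (hY : ∀ i ∈ s, AEStronglyMeasurable (Y i) μ)
    (hC : ∀ i ∈ s, ∀ ω, |Y i ω| ≤ C) : Integrable (fun ω => ∏ i ∈ s, Y i ω) μ := by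
  refine .of_bound (Finset.aestronglyMeasurable_fun_prod s hY) (C ^ s.card)
    (ae_of_all _ fun ω => ?_)
  rw [Real.norm_eq_abs, abs_prod, ← prod_const]
  exact prod_le_prod (fun i _ => abs_nonneg _) fun i hi => hC i hi ω

theorem condExp_exp_sub_sq_le_one [IsFiniteMeasure μ] {m : MeasurableSpace Ω} (hm : m ≤ m0)
    {Y : Ω → ℝ} (hY : Integrable Y μ) (hcond : μ[Y | m] =ᵐ[μ] 0)
    (hlow : ∀ᵐ ω ∂μ, -1 / 2 ≤ Y ω) :
    μ[fun ω => Real.exp (Y ω - Y ω ^ 2) | m] ≤ᵐ[μ] 1 := by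
  have hle : (fun ω => Real.exp (Y ω - Y ω ^ 2)) ≤ᵐ[μ] fun ω => 1 + Y ω :=
    hlow.mono fun ω h => Real.exp_sub_sq_le_one_add h
  have hint_lin : Integrable (fun ω => 1 + Y ω) μ := (integrable_const 1).add hY
  have hint_exp : Integrable (fun ω => Real.exp (Y ω - Y ω ^ 2)) μ :=
    hint_lin.mono' (by fun_prop) <| hle.mono fun ω h => by
      rwa [Real.norm_of_nonneg (Real.exp_pos _).le]
  have hcond_lin : μ[fun ω => 1 + Y ω | m] =ᵐ[μ] 1 := by
    filter_upwards [condExp_add (integrable_const (1 : ℝ)) hY m, hcond] with ω hadd hY0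
    rw [Pi.add_apply, condExp_const hm, hY0] at hadd
    exact hadd.trans (by simp)
  filter_upwards [condExp_mono hint_exp hint_lin hle, hcond_lin] with ω h1 h2
  exact h1.trans h2.le

theorem integral_prod_le_one_of_condExp_le_one [IsProbabilityMeasure μ] {F : Filtration ℕ m0}
    {Y : ℕ → Ω → ℝ} {C : ℝ} (n : ℕ)
    (hmeas : ∀ i ∈ Icc 1 n, StronglyMeasurable[F i] (Y i))
    (hnonneg : ∀ i ∈ Icc 1 n, ∀ ω, 0 ≤ Y i ω) (hbdd : ∀ i ∈ Icc 1 n, ∀ ω, Y i ω ≤ C)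
    (hcond : ∀ i ∈ Icc 1 n, μ[Y i | F (i - 1)] ≤ᵐ[μ] 1) :
    ∫ ω, ∏ i ∈ Icc 1 n, Y i ω ∂μ ≤ 1 := by
  induction n with
  | zero => simp
  | succ n ih =>
    have hsub : Icc 1 n ⊆ Icc 1 (n + 1) := Icc_subset_Icc_right n.le_succ
    have hlast : n + 1 ∈ Icc 1 (n + 1) := right_mem_Icc.mpr n.succ_pos
    have hint : ∀ s ⊆ Icc 1 (n + 1), Integrable (fun ω => ∏ i ∈ s, Y i ω) μ := fun s hs =>
      integrable_finset_prod_of_abs_le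
        (fun i hi => ((hmeas i (hs hi)).mono (F.le i)).aestronglyMeasurable) fun i hi ω => by
          rw [abs_of_nonneg (hnonneg i (hs hi) ω)]
          exact hbdd i (hs hi) ω
    have hsplit : (fun ω => ∏ i ∈ Icc 1 n, Y i ω) * Y (n + 1) =
        fun ω => ∏ i ∈ Icc 1 (n + 1), Y i ω :=
      funext fun ω => (prod_Icc_succ_top (Nat.le_add_left 1 n) _).symm
    have hprod_meas : StronglyMeasurable[F n] (fun ω => ∏ i ∈ Icc 1 n, Y i ω) :=
      Finset.stronglyMeasurable_fun_prod _ fun i hi =>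
        (hmeas i (hsub hi)).mono (F.mono (mem_Icc.mp hi).2)
    have hpull := condExp_mul_of_stronglyMeasurable_left hprod_meas
      (hsplit ▸ hint _ subset_rfl) (by simpa using hint {n + 1} (singleton_subset_iff.mpr hlast))
    have hcond_last : μ[Y (n + 1) | F n] ≤ᵐ[μ] 1 := hcond (n + 1) hlast
    calc ∫ ω, ∏ i ∈ Icc 1 (n + 1), Y i ω ∂μ
        = ∫ ω, μ[(fun ω => ∏ i ∈ Icc 1 n, Y i ω) * Y (n + 1) | F n] ω ∂μ := by
          rw [integral_condExp (F.le n), hsplit]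
      _ ≤ ∫ ω, ∏ i ∈ Icc 1 n, Y i ω ∂μ := by
          refine integral_mono_ae integrable_condExp (hint _ hsub) ?_
          filter_upwards [hpull, hcond_last] with ω hpull_ω hcond_ω
          rw [hpull_ω, Pi.mul_apply]
          exact mul_le_of_le_one_right (prod_nonneg fun i hi => hnonneg i (hsub hi) ω) hcond_ω
      _ ≤ 1 := ih (fun i hi => hmeas i (hsub hi)) (fun i hi => hnonneg i (hsub hi))
          (fun i hi => hbdd i (hsub hi)) fun i hi => hcond i (hsub hi)

theorem measure_le_mul_sum_sub_sq_mul_sum_sq_le [IsProbabilityMeasure μ] {F : Filtration ℕ m0}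
    {X : ℕ → Ω → ℝ} {n : ℕ} (hmeas : ∀ i ∈ Icc 1 n, StronglyMeasurable[F i] (X i))
    (hint : ∀ i ∈ Icc 1 n, Integrable (X i) μ)
    (hcond : ∀ i ∈ Icc 1 n, μ[X i | F (i - 1)] =ᵐ[μ] 0) (t : ℝ)
    (hlow : ∀ i ∈ Icc 1 n, ∀ᵐ ω ∂μ, -1 / 2 ≤ t * X i ω) (L : ℝ) :
    μ {ω | L ≤ t * ∑ i ∈ Icc 1 n, X i ω - t ^ 2 * ∑ i ∈ Icc 1 n, X i ω ^ 2}
      ≤ ENNReal.ofReal (Real.exp (-L)) := by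
  set f : Ω → ℝ := fun ω => t * ∑ i ∈ Icc 1 n, X i ω - t ^ 2 * ∑ i ∈ Icc 1 n, X i ω ^ 2
  set Y : ℕ → Ω → ℝ := fun i ω => Real.exp (t * X i ω - (t * X i ω) ^ 2)
  have hexp_f : (fun ω => Real.exp (1 * f ω)) = fun ω => ∏ i ∈ Icc 1 n, Y i ω := by
    ext ω
    simp only [f, Y, one_mul, ← Real.exp_sum, sum_sub_distrib, mul_sum, mul_pow]
  have hY_meas : ∀ i ∈ Icc 1 n, StronglyMeasurable[F i] (Y i) := fun i hi =>
    have := (hmeas i hi).measurable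
    Measurable.stronglyMeasurable (by fun_prop)
  have hY_int : Integrable (fun ω => ∏ i ∈ Icc 1 n, Y i ω) μ :=
    integrable_finset_prod_of_abs_le
      (fun i hi => ((hY_meas i hi).mono (F.le i)).aestronglyMeasurable) fun i _ ω => by
        rw [abs_of_nonneg (Real.exp_pos _).le]
        exact Real.exp_sub_sq_le _
  have hmgf : ProbabilityTheory.mgf f μ 1 ≤ 1 := by
    rw [ProbabilityTheory.mgf, hexp_f]
    refine integral_prod_le_one_of_condExp_le_one n hY_meas (fun i _ ω => (Real.exp_pos _).le)
      (fun i _ ω => Real.exp_sub_sq_le _) fun i hi => ?_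
    refine condExp_exp_sub_sq_le_one (F.le _) ((hint i hi).const_mul t) ?_ (hlow i hi)
    filter_upwards [condExp_smul t (X i) (F (i - 1)), hcond i hi] with ω hsmul h0
    rw [Pi.smul_apply, h0, Pi.zero_apply, smul_zero] at hsmul
    exact hsmul
  have hchernoff := ProbabilityTheory.measure_ge_le_exp_mul_mgf L zero_le_one (hexp_f ▸ hY_int)
  rw [← ofReal_measureReal]
  refine ENNReal.ofReal_le_ofReal (hchernoff.trans ?_)
  rw [neg_one_mul]
  exact mul_le_of_le_one_right (Real.exp_pos _).le hmgf

theorem measure_le_mul_sum_sub_sq_mul_sum_sq_le_of_abs_le [IsProbabilityMeasure μ]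
    {F : Filtration ℕ m0} {X : ℕ → Ω → ℝ} {n : ℕ} {b : ℝ} (hb : 0 < b)
    (hmeas : ∀ i ∈ Icc 1 n, StronglyMeasurable[F i] (X i))
    (hcond : ∀ i ∈ Icc 1 n, μ[X i | F (i - 1)] =ᵐ[μ] 0)
    (hbdd : ∀ i ∈ Icc 1 n, ∀ᵐ ω ∂μ, |X i ω| ≤ b) {t : ℝ} (ht : |t| ≤ (2 * b)⁻¹) (L : ℝ) :
    μ {ω | L ≤ t * ∑ i ∈ Icc 1 n, X i ω - t ^ 2 * ∑ i ∈ Icc 1 n, X i ω ^ 2}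
      ≤ ENNReal.ofReal (Real.exp (-L)) := by
  refine measure_le_mul_sum_sub_sq_mul_sum_sq_le hmeas (fun i hi => ?_) hcond t
    (fun i hi => (hbdd i hi).mono fun ω h => ?_) L
  · exact .of_bound ((hmeas i hi).mono (F.le i)).aestronglyMeasurable b
      ((hbdd i hi).mono fun ω h => by rwa [Real.norm_eq_abs])
  · have : |t * X i ω| ≤ 1 / 2 := calc
      |t * X i ω| = |t| * |X i ω| := abs_mul _ _
      _ ≤ (2 * b)⁻¹ * b := by gcongr
      _ = 1 / 2 := by field_simp
    linarith [neg_abs_le (t * X i ω)]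

theorem measure_biUnion_range_le {A : ℕ → Set Ω} {ε : ℝ} (J : ℕ)
    (h : ∀ j, μ (A j) ≤ ENNReal.ofReal ε) :
    μ (⋃ j ∈ range J, A j) ≤ ENNReal.ofReal (J * ε) := by
  calc μ (⋃ j ∈ range J, A j) ≤ ∑ j ∈ range J, μ (A j) := measure_biUnion_finset_le _ _
    _ ≤ #(range J) • ENNReal.ofReal ε := sum_le_card_nsmul _ _ _ fun j _ => h j
    _ = ENNReal.ofReal (J * ε) := by
      rw [card_range, nsmul_eq_mul, ENNReal.ofReal_mul (Nat.cast_nonneg _), ENNReal.ofReal_natCast]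

theorem ae_sum_sq_le_card_mul_sq {X : ℕ → Ω → ℝ} {b : ℝ} {s : Finset ℕ}
    (hbdd : ∀ i ∈ s, ∀ᵐ ω ∂μ, |X i ω| ≤ b) :
    ∀ᵐ ω ∂μ, ∑ i ∈ s, X i ω ^ 2 ≤ s.card * b ^ 2 := by
  filter_upwards [(Filter.eventually_all_finset s).mpr hbdd] with ω hω
  rw [← nsmul_eq_mul, ← sum_const]
  exact sum_le_sum fun i hi => sq_le_sq' (abs_le.mp (hω i hi)).1 (abs_le.mp (hω i hi)).2

theorem ofReal_one_sub_le_of_measure_compl_le [IsProbabilityMeasure μ] {s : Set Ω} {p : ℝ}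
    (hp : 0 ≤ p) (h : μ sᶜ ≤ ENNReal.ofReal p) : ENNReal.ofReal (1 - p) ≤ μ s := by
  rw [ENNReal.ofReal_sub _ hp, ENNReal.ofReal_one, tsub_le_iff_right, ← measure_univ (μ := μ)]
  exact (measure_univ_le_add_compl s).trans (by gcongr)

end MeasureTheory

/-- Empirical Bernstein-type inequality for bounded martingale difference sequences
(Theorem 3 of Zhang et al. (2021)): for a martingale difference sequence `X` with
`|X i| ≤ b` a.s. and `δ ∈ (0, e⁻¹]` (`δ < e⁻¹` in the source),
`P(|∑_{i=1}^n X i| ≤ 8·√(∑_{i=1}^n X i²·ln(1/δ)) + 16·b·ln(1/δ)) ≥ 1 − 6·δ·log₂ n`. -/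
theorem empirical_bernstein
    {Ω : Type*} {m0 : MeasurableSpace Ω} (μ : Measure Ω) [IsProbabilityMeasure μ]
    (F : Filtration ℕ m0) (n : ℕ) (hn : 2 ≤ n)
    (X : ℕ → Ω → ℝ) (b : ℝ) (hb : 0 < b)
    (hmeas : ∀ i ∈ Finset.Icc 1 n, StronglyMeasurable[F i] (X i))
    (hcond : ∀ i ∈ Finset.Icc 1 n, μ[X i | F (i - 1)] =ᵐ[μ] 0)
    (hbdd : ∀ i ∈ Finset.Icc 1 n, ∀ᵐ ω ∂μ, |X i ω| ≤ b)
    (δ : ℝ) (hδ : 0 < δ) (hδe : δ < (Real.exp 1)⁻¹) :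
    ENNReal.ofReal (1 - 6 * δ * Real.logb 2 n) ≤
      μ {ω | |∑ i ∈ Finset.Icc 1 n, X i ω| ≤
          8 * Real.sqrt ((∑ i ∈ Finset.Icc 1 n, (X i ω) ^ 2) * Real.log (1 / δ))
            + 16 * b * Real.log (1 / δ)} := by
  set L := Real.log (1 / δ)
  have hL : 1 < L := Real.one_lt_log_one_div hδ hδe
  have hexpL : Real.exp (-L) = δ := by
    rw [Real.exp_neg, Real.exp_log (by positivity), one_div, inv_inv]
  set E : ℝ → Set Ω :=
    fun t => {ω | L ≤ t * ∑ i ∈ Icc 1 n, X i ω - t ^ 2 * ∑ i ∈ Icc 1 n, X i ω ^ 2}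
  have hE (j : ℕ) :
      μ (E (2 * b * 2 ^ j)⁻¹ ∪ E (-(2 * b * 2 ^ j)⁻¹)) ≤ ENNReal.ofReal (2 * δ) := by
    have hj : |(2 * b * 2 ^ j)⁻¹| ≤ (2 * b)⁻¹ := by
      rw [abs_of_pos (by positivity)]
      exact inv_anti₀ (by positivity)
        (le_mul_of_one_le_right (by positivity) (one_le_pow₀ one_le_two))
    have htail := fun {t : ℝ} (ht : |t| ≤ (2 * b)⁻¹) =>
      measure_le_mul_sum_sub_sq_mul_sum_sq_le_of_abs_le hb hmeas hcond hbdd ht L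
    rw [show 2 * δ = δ + δ from two_mul δ, ENNReal.ofReal_add hδ.le hδ.le, ← hexpL]
    exact (measure_union_le _ _).trans (add_le_add (htail hj) (htail ((abs_neg _).trans_le hj)))
  have hcount := Nat.clog_two_add_one_le_three_mul_logb hn
  have hlogb : 0 ≤ Real.logb 2 n := by linarith [(Nat.clog 2 n).cast_nonneg (α := ℝ)]
  refine ofReal_one_sub_le_of_measure_compl_le (by positivity) ((measure_mono_ae ?_).trans
    ((measure_biUnion_range_le (Nat.clog 2 n + 1) hE).trans
      (ENNReal.ofReal_le_ofReal ?_)))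
  · filter_upwards [ae_sum_sq_le_card_mul_sq hbdd] with ω hV hω
    by_contra hbad
    change ω ∉ ⋃ j ∈ range (Nat.clog 2 n + 1), _ at hbad
    simp only [E, Set.mem_iUnion, Set.mem_union, Set.mem_ofPred_eq, not_exists, not_or, not_le,
      Finset.mem_range] at hbad
    rw [Nat.card_Icc, Nat.add_sub_cancel] at hV
    exact hω (abs_le_eight_sqrt_mul_add_of_forall_lt hb hL.le
      (sum_nonneg fun i _ => sq_nonneg _) hV fun j hj => hbad j (Nat.lt_succ_of_le hj))
  · push_cast
    nlinarith
end

section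
/- Let λ₁, λ₂, λ₄ > 0 and λ₃ ≥ 1, and let κ = max{⌈log₂(λ₁)⌉, 1}. Let a_1, …, a_{κ+1} be real numbers with 0 ≤ a_i ≤ λ₁ for all i ∈ {1, …, κ+1}, satisfying a_i ≤ λ₂·√(a_i + a_{i+1} + 2^{i+1}·λ₃) + λ₄ for all i ∈ {1, …, κ}. Then a_1 ≤ 22·λ₂² + 6·λ₄ + 4·λ₂·√(2·λ₃). -/
private lemma sqrt_add_le' (x y : ℝ) (hx : 0 ≤ x) (hy : 0 ≤ y) :
    Real.sqrt (x + y) ≤ Real.sqrt x + Real.sqrt y := by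
  have h1 := Real.sq_sqrt hx
  have h2 := Real.sq_sqrt hy
  have h3 := Real.sqrt_nonneg x
  have h4 := Real.sqrt_nonneg y
  have : x + y ≤ (Real.sqrt x + Real.sqrt y) ^ 2 := by nlinarith [mul_nonneg h3 h4]
  calc Real.sqrt (x + y) ≤ Real.sqrt ((Real.sqrt x + Real.sqrt y) ^ 2) :=
        Real.sqrt_le_sqrt this
    _ = Real.sqrt x + Real.sqrt y := Real.sqrt_sq (by linarith)

private lemma quad_bound' (b c x : ℝ) (hx : 0 ≤ x) (hc : 0 ≤ c)
    (h : x ≤ 2 * b * Real.sqrt x + c) : x ≤ 4 * b ^ 2 + 2 * c := by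
  have hs := Real.sq_sqrt hx
  nlinarith [sq_nonneg (Real.sqrt x - 2 * b), Real.sqrt_nonneg x]

/-- Solution of a system of recursive square-root inequalities
(Lemma 19 of Zhang et al. (2021)): with `κ = max{⌈log₂ λ₁⌉, 1}`, if
`0 ≤ a i ≤ λ₁` for `i ∈ {1,…,κ+1}` and
`a i ≤ λ₂·√(a i + a (i+1) + 2^{i+1}·λ₃) + λ₄` for `i ∈ {1,…,κ}`, then
`a 1 ≤ 22·λ₂² + 6·λ₄ + 4·λ₂·√(2·λ₃)`. -/
theorem recursive_sqrt_ineq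
    (l1 l2 l4 : ℝ) (h1 : 0 < l1) (h2 : 0 < l2) (h4 : 0 < l4)
    (l3 : ℝ) (h3 : 1 ≤ l3)
    (κ : ℤ) (hκ : κ = max ⌈Real.logb 2 l1⌉ 1)
    (a : ℤ → ℝ)
    (ha : ∀ i ∈ Finset.Icc 1 (κ + 1), 0 ≤ a i ∧ a i ≤ l1)
    (hrec : ∀ i ∈ Finset.Icc 1 κ,
      a i ≤ l2 * Real.sqrt (a i + a (i + 1) + (2 : ℝ) ^ (i + 1) * l3) + l4) :
    a 1 ≤ 22 * l2 ^ 2 + 6 * l4 + 4 * l2 * Real.sqrt (2 * l3) := by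
  have hκ1 : (1 : ℤ) ≤ κ := hκ ▸ le_max_right _ _
  set D : ℝ := 12 * l2 ^ 2 + 4 * l4 with hD
  have hD0 : 0 ≤ D := by positivity
  have hsD := Real.sq_sqrt hD0
  have hl30 : (0 : ℝ) ≤ l3 := by linarith
  -- l1 ≤ 2 ^ κ
  have hl1 : l1 ≤ (2 : ℝ) ^ κ := by
    have hle : Real.logb 2 l1 ≤ (κ : ℝ) := by
      refine le_trans (Int.le_ceil _) ?_
      exact_mod_cast hκ ▸ le_max_left _ _
    calc l1 = (2 : ℝ) ^ Real.logb 2 l1 :=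
          (Real.rpow_logb two_pos (by norm_num) h1).symm
      _ ≤ (2 : ℝ) ^ ((κ : ℝ)) := Real.rpow_le_rpow_of_exponent_le one_le_two hle
      _ = (2 : ℝ) ^ κ := Real.rpow_intCast 2 κ
  -- the induction step
  have step : ∀ i : ℤ, 1 ≤ i → i ≤ κ →
      a (i + 1) ≤ D + (2 : ℝ) ^ (i + 2) * l3 → a i ≤ D + (2 : ℝ) ^ (i + 1) * l3 := by
    intro i h1i hiκ hnext
    have hpow : (0 : ℝ) < (2 : ℝ) ^ (i + 1) := zpow_pos two_pos _
    have hai := ha i (Finset.mem_Icc.mpr ⟨h1i, by omega⟩)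
    have hai1 := ha (i + 1) (Finset.mem_Icc.mpr ⟨by omega, by omega⟩)
    have hri := hrec i (Finset.mem_Icc.mpr ⟨h1i, hiκ⟩)
    by_cases hA : a i ≤ (2 : ℝ) ^ (i + 1) * l3
    · linarith
    · push_neg at hA
      have h2e : (2 : ℝ) ^ (i + 2) = 2 * (2 : ℝ) ^ (i + 1) := by
        rw [show i + 2 = (i + 1) + 1 by ring, zpow_add_one₀ (two_ne_zero)]; ring
      rw [h2e] at hnext
      have hX : a i + a (i + 1) + (2 : ℝ) ^ (i + 1) * l3 ≤ 4 * a i + D := by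
        nlinarith [hnext, hA]
      have hsq1 : Real.sqrt (a i + a (i + 1) + (2 : ℝ) ^ (i + 1) * l3)
          ≤ Real.sqrt (4 * a i + D) := Real.sqrt_le_sqrt hX
      have hsq2 : Real.sqrt (4 * a i + D) ≤ 2 * Real.sqrt (a i) + Real.sqrt D := by
        have h4a : (0 : ℝ) ≤ 4 * a i := by linarith [hai.1]
        have e1 : Real.sqrt (4 * a i) = 2 * Real.sqrt (a i) := by
          rw [show (4 : ℝ) * a i = 2 ^ 2 * a i by ring,
            Real.sqrt_mul (by positivity), Real.sqrt_sq (by norm_num : (0:ℝ) ≤ 2)]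
        calc Real.sqrt (4 * a i + D) ≤ Real.sqrt (4 * a i) + Real.sqrt D :=
              sqrt_add_le' _ _ h4a hD0
          _ = 2 * Real.sqrt (a i) + Real.sqrt D := by rw [e1]
      have hc : (0 : ℝ) ≤ l2 * Real.sqrt D + l4 := by
        have := Real.sqrt_nonneg D; positivity
      have hq : a i ≤ 2 * l2 * Real.sqrt (a i) + (l2 * Real.sqrt D + l4) := by
        have := mul_le_mul_of_nonneg_left (hsq1.trans hsq2) h2.le
        nlinarith [this]
      have := quad_bound' l2 (l2 * Real.sqrt D + l4) (a i) hai.1 hc hq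
      -- a i ≤ 4 l2² + 2 l2 √D + 2 l4 ≤ D
      have hAM : 2 * (l2 * Real.sqrt D) ≤ 2 * l2 ^ 2 + D / 2 := by
        nlinarith [sq_nonneg (l2 - Real.sqrt D / 2)]
      have hD3 : (0 : ℝ) ≤ (2 : ℝ) ^ (i + 1) * l3 := by positivity
      linarith
  -- downward induction
  have main : ∀ n : ℕ, ∀ i : ℤ, i = κ + 1 - (n : ℤ) → 1 ≤ i →
      a i ≤ D + (2 : ℝ) ^ (i + 1) * l3 := by
    intro n
    induction n with
    | zero =>
      intro i hi _
      have hieq : i = κ + 1 := by omega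
      subst hieq
      have hai := ha (κ + 1) (Finset.mem_Icc.mpr ⟨by omega, le_refl _⟩)
      have hmono : (2 : ℝ) ^ κ ≤ (2 : ℝ) ^ (κ + 1 + 1) :=
        zpow_le_zpow_right₀ one_le_two (by omega)
      have hpos : (0 : ℝ) < (2 : ℝ) ^ (κ + 1 + 1) := zpow_pos two_pos _
      have : (2 : ℝ) ^ (κ + 1 + 1) ≤ (2 : ℝ) ^ (κ + 1 + 1) * l3 :=
        le_mul_of_one_le_right hpos.le h3
      linarith [hai.2]
    | succ n ih =>
      intro i hi h1i
      have hiκ : i ≤ κ := by omega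
      have hnext := ih (i + 1) (by push_cast at hi ⊢; omega) (by omega)
      exact step i h1i hiκ (by rw [show i + 1 + 1 = i + 2 by ring] at hnext; exact hnext)
  -- bounds on a 1 and a 2
  have hA1 : a 1 ≤ D + 4 * l3 := by
    have := main κ.toNat 1 (by omega) le_rfl
    rwa [show ((1 : ℤ) + 1) = (2 : ℤ) by ring, show (2 : ℝ) ^ (2 : ℤ) = 4 by norm_num]
      at this
  have hA2 : a 2 ≤ D + 8 * l3 := by
    have := main (κ - 1).toNat 2 (by omega) (by norm_num)
    rwa [show ((2 : ℤ) + 1) = (3 : ℤ) by ring, show (2 : ℝ) ^ (3 : ℤ) = 8 by norm_num]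
      at this
  -- final application of the recursion at i = 1
  have hr1 := hrec 1 (Finset.mem_Icc.mpr ⟨le_refl _, hκ1⟩)
  rw [show ((1 : ℤ) + 1) = (2 : ℤ) by ring, show (2 : ℝ) ^ (2 : ℤ) = 4 by norm_num] at hr1
  have ha1 := ha 1 (Finset.mem_Icc.mpr ⟨le_refl _, by omega⟩)
  have ha2 := ha 2 (Finset.mem_Icc.mpr ⟨by norm_num, by omega⟩)
  have hsum : a 1 + a 2 + 4 * l3 ≤ 2 * D + 16 * l3 := by linarith
  have hs1 : Real.sqrt (a 1 + a 2 + 4 * l3) ≤ Real.sqrt (2 * D) + Real.sqrt (16 * l3) :=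
    (Real.sqrt_le_sqrt hsum).trans (by
      have : (2 : ℝ) * D + 16 * l3 = (2 * D) + (16 * l3) := by ring
      rw [this]; exact sqrt_add_le' _ _ (by positivity) (by positivity))
  have h16 : Real.sqrt (16 * l3) ≤ 4 * Real.sqrt (2 * l3) := by
    have e1 : Real.sqrt (16 * l3) = 4 * Real.sqrt l3 := by
      rw [show (16 : ℝ) * l3 = 4 ^ 2 * l3 by ring, Real.sqrt_mul (by positivity),
        Real.sqrt_sq (by norm_num : (0:ℝ) ≤ 4)]
    rw [e1]
    have : Real.sqrt l3 ≤ Real.sqrt (2 * l3) := Real.sqrt_le_sqrt (by linarith)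
    linarith
  have h2D : l2 * Real.sqrt (2 * D) ≤ 9 * l2 ^ 2 + l4 := by
    have hw := Real.sq_sqrt (show (0:ℝ) ≤ 2 * D by positivity)
    nlinarith [sq_nonneg (2 * l2 - Real.sqrt (2 * D) / 2), Real.sqrt_nonneg (2 * D)]
  have hmul : l2 * Real.sqrt (a 1 + a 2 + 4 * l3)
      ≤ l2 * (Real.sqrt (2 * D) + 4 * Real.sqrt (2 * l3)) :=
    mul_le_mul_of_nonneg_left (by linarith) h2.le
  have hst : (0 : ℝ) ≤ Real.sqrt (2 * l3) := Real.sqrt_nonneg _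
  nlinarith [hr1, hmul, h2D, sq_nonneg l2, mul_nonneg h2.le hst]
end
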